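/- arXiv:1406.1003 — 6 statements merged into one kernel-verified Lean document; each statement's English description precedes it below -/
import Mathlib

section
/- Let Σ be a reduced root system in a real vector space with positive system Σ⁺, and for v in the coweight space define ℓ(v) = Σ_{β∈Σ⁺} |⟨v,β⟩|. Let ν be an element with ⟨ν,α⟩ > 0 for some α ∈ Σ⁺, and let k be an integer with 0 ≤ k ≤ ⟨ν,α⟩. Set μ = ν − k·α̌. Then ℓ(ν) ≥ ℓ(μ) + 2·min{k, ⟨ν,α⟩ − k}. -/
open Module

variable {V : Type} [AddCommGroup V] [Module ℝ V]

/-- A reduced crystallographic root system in the dual of `V`, with a chosen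
positive system. -/
structure RootSystemData (V : Type) [AddCommGroup V] [Module ℝ V] where
  roots : Finset (Module.Dual ℝ V)
  coroot : Module.Dual ℝ V → V
  pos : Finset (Module.Dual ℝ V)
  root_ne_zero : ∀ α ∈ roots, α ≠ 0
  coroot_self : ∀ α ∈ roots, α (coroot α) = 2
  reflection_mem : ∀ α ∈ roots, ∀ β ∈ roots, β - β (coroot α) • α ∈ roots
  crystallographic : ∀ α ∈ roots, ∀ β ∈ roots, ∃ n : ℤ, β (coroot α) = (n : ℝ)
  reduced : ∀ α ∈ roots, ∀ t : ℝ, t • α ∈ roots → t = 1 ∨ t = -1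
  pos_subset : pos ⊆ roots
  pos_or_neg : ∀ α ∈ roots, α ∈ pos ∨ -α ∈ pos
  pos_not_neg : ∀ α ∈ pos, -α ∉ pos
  pos_add : ∀ α ∈ pos, ∀ β ∈ pos, α + β ∈ roots → α + β ∈ pos

/-- The contragredient action of a linear automorphism of `V` on the dual space:
`(w β)(v) = β (w⁻¹ v)`. -/
noncomputable def dualAct (w : V ≃ₗ[ℝ] V) (β : Module.Dual ℝ V) : Module.Dual ℝ V :=
  β.comp w.symm.toLinearMap

namespace RootSystemData

variable (D : RootSystemData V)

/-- `ℓ(v) = Σ_{β ∈ Σ⁺} |⟨v, β⟩|`, the length of the translation by `v`. -/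
noncomputable def coLen (v : V) : ℝ := ∑ β ∈ D.pos, |β v|

/-- The reflection `s_α` acting on `V`, as a linear automorphism. -/
noncomputable def reflV (α : Module.Dual ℝ V) (h : α (D.coroot α) = 2) : V ≃ₗ[ℝ] V where
  toFun := fun v => v - α v • D.coroot α
  map_add' := by intro x y; simp only [map_add, add_smul]; abel
  map_smul' := by intro r x; simp only [map_smul, smul_eq_mul, RingHom.id_apply, smul_sub,
    smul_smul]
  invFun := fun v => v - α v • D.coroot α
  left_inv := by
    intro v
    simp only [map_sub, map_smul, smul_eq_mul, h]
    have : α v - α v * 2 = -(α v) := by ring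
    rw [this, neg_smul, sub_neg_eq_add, sub_add_cancel]
  right_inv := by
    intro v
    simp only [map_sub, map_smul, smul_eq_mul, h]
    have : α v - α v * 2 = -(α v) := by ring
    rw [this, neg_smul, sub_neg_eq_add, sub_add_cancel]

/-- The reflection attached to a root. -/
noncomputable def sRef (α : Module.Dual ℝ V) (h : α ∈ D.roots) : V ≃ₗ[ℝ] V :=
  D.reflV α (D.coroot_self α h)

/-- The Weyl group, as the subgroup of `GL(V)` generated by the reflections in the roots. -/
noncomputable def weylGroup : Subgroup (V ≃ₗ[ℝ] V) :=
  Subgroup.closure {e | ∃ α, ∃ h : α ∈ D.roots, e = D.sRef α h}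

open scoped Classical in
/-- The length of a Weyl group element: the number of positive roots made negative. -/
noncomputable def lenW (w : V ≃ₗ[ℝ] V) : ℕ :=
  (D.pos.filter fun β => dualAct w β ∉ D.pos).card

/-- The Bruhat order, via the standard characterization: the reflexive-transitive
closure of the relation `x < t x` whenever `t` is a reflection and `ℓ(x) < ℓ(t x)`. -/
def bruhatLE (x y : V ≃ₗ[ℝ] V) : Prop :=
  Relation.ReflTransGen
    (fun u v => D.lenW u < D.lenW v ∧ ∃ α, ∃ h : α ∈ D.roots, v = D.sRef α h * u) x y

/-- Strict Bruhat order. -/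
def bruhatLT (x y : V ≃ₗ[ℝ] V) : Prop := D.bruhatLE x y ∧ x ≠ y

/-- A simple (positive) root: a positive root which is not the sum of two positive roots. -/
def IsSimpleRoot (α : Module.Dual ℝ V) : Prop :=
  α ∈ D.pos ∧ ¬ ∃ β ∈ D.pos, ∃ γ ∈ D.pos, α = β + γ

/-- The set `Δ_w = {α ∈ Δ : w(α) > 0}`. -/
def DeltaW (w : V ≃ₗ[ℝ] V) : Set (Module.Dual ℝ V) :=
  {α | D.IsSimpleRoot α ∧ dualAct w α ∈ D.pos}

/-- The parabolic subgroup `W_Θ` generated by the reflections in the roots belonging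
to `Θ`. -/
noncomputable def parabolic (Θ : Set (Module.Dual ℝ V)) : Subgroup (V ≃ₗ[ℝ] V) :=
  Subgroup.closure {e | ∃ α, ∃ h : α ∈ D.roots, α ∈ Θ ∧ e = D.sRef α h}

/-- A dominant coweight. -/
def IsDominant (v : V) : Prop := ∀ β ∈ D.pos, 0 ≤ β v

end RootSystemData


private lemma pair_abs (p q p' q' : ℝ) (hs : p + q = p' + q') (hd : |p - q| ≤ |p' - q'|) :
    |p| + |q| ≤ |p'| + |q'| := by
  rcases abs_cases p with ⟨h1, _⟩ | ⟨h1, _⟩ <;>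
  rcases abs_cases q with ⟨h2, _⟩ | ⟨h2, _⟩ <;>
  rcases abs_cases (p' - q') with ⟨h3, _⟩ | ⟨h3, _⟩ <;>
  rcases abs_cases p' with ⟨h4, _⟩ | ⟨h4, _⟩ <;>
  rcases abs_cases q' with ⟨h5, _⟩ | ⟨h5, _⟩ <;>
  rcases abs_cases (p - q) with ⟨h6, _⟩ | ⟨h6, _⟩ <;>
  linarith

/-- If `α ∈ Σ⁺`, `⟨ν,α⟩ > 0`, `k ∈ ℤ` with `0 ≤ k ≤ ⟨ν,α⟩` and
`μ = ν − k·α̌`, then `ℓ(ν) ≥ ℓ(μ) + 2·min{k, ⟨ν,α⟩ − k}`. -/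
theorem coLen_inequality (D : RootSystemData V) (ν : V) (α : Module.Dual ℝ V)
    (hα : α ∈ D.pos) (hν : 0 < α ν) (k : ℤ) (hk0 : 0 ≤ k) (hk : (k : ℝ) ≤ α ν) :
    D.coLen (ν - (k : ℝ) • D.coroot α) + 2 * min (k : ℝ) (α ν - (k : ℝ)) ≤ D.coLen ν := by
  classical
  have hαr : α ∈ D.roots := D.pos_subset hα
  have hco : α (D.coroot α) = 2 := D.coroot_self α hαr
  set μ : V := ν - (k : ℝ) • D.coroot α with hμ
  set σ : Module.Dual ℝ V → Module.Dual ℝ V := fun β => β - β (D.coroot α) • α with hσdef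
  have hσmem : ∀ β ∈ D.roots, σ β ∈ D.roots := fun β hβ => D.reflection_mem α hαr β hβ
  have hσσ : ∀ β, σ (σ β) = β := by
    intro β
    simp only [hσdef, LinearMap.sub_apply, LinearMap.smul_apply, smul_eq_mul, hco]
    module
  have hμval : ∀ β : Module.Dual ℝ V, β μ = β ν - (k : ℝ) * β (D.coroot α) := by
    intro β; simp [hμ, map_sub, map_smul]
  have hσval : ∀ (β : Module.Dual ℝ V) (v : V), (σ β) v = β v - β (D.coroot α) * α v := by
    intro β v; simp [hσdef, smul_eq_mul]
  set g : Module.Dual ℝ V → ℝ :=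
    fun β => (|β ν| + |(σ β) ν|) - (|β μ| + |(σ β) μ|) with hgdef
  have habs : |α ν - 2 * (k : ℝ)| ≤ α ν := by
    rw [abs_le]
    have : (0 : ℝ) ≤ (k : ℝ) := by exact_mod_cast hk0
    constructor <;> linarith
  have hnonneg : ∀ β : Module.Dual ℝ V, 0 ≤ g β := by
    intro β
    have key : |β μ| + |(σ β) μ| ≤ |β ν| + |(σ β) ν| := by
      apply pair_abs
      · rw [hσval β μ, hμval β, hσval β ν, hμval α, hco]; ring
      · have e1 : β μ - (σ β) μ = β (D.coroot α) * (α ν - 2 * (k : ℝ)) := by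
          rw [hσval β μ, hμval α, hco]; ring
        have e2 : β ν - (σ β) ν = β (D.coroot α) * α ν := by
          rw [hσval β ν]; ring
        rw [e1, e2, abs_mul, abs_mul]
        exact mul_le_mul_of_nonneg_left (by rwa [abs_of_pos hν]) (abs_nonneg _)
    simp only [hgdef]
    linarith [key]
  have hσα : σ α = -α := by
    simp only [hσdef, hco]; module
  have hαμ : α μ = α ν - 2 * (k : ℝ) := by rw [hμval α, hco]; ring
  have hvalα : g α = 2 * α ν - 2 * |α ν - 2 * (k : ℝ)| := by
    simp only [hgdef, hσα, LinearMap.neg_apply, abs_neg, hαμ, abs_of_pos hν]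
    ring
  have hmin : 2 * min (k : ℝ) (α ν - (k : ℝ)) = α ν - |α ν - 2 * (k : ℝ)| := by
    rcases le_total ((k : ℝ)) (α ν - (k : ℝ)) with hle | hle
    · rw [min_eq_left hle, abs_of_nonneg (by linarith)]; ring
    · rw [min_eq_right hle, abs_of_nonpos (by linarith)]; ring
  have hsumσ : ∀ v : V, ∑ β ∈ D.roots, |(σ β) v| = ∑ β ∈ D.roots, |β v| := by
    intro v
    refine Finset.sum_nbij' σ σ hσmem hσmem (fun β _ => hσσ β) (fun β _ => hσσ β) ?_
    intro β _
    rfl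
  have hsumg : ∑ β ∈ D.roots, g β
      = 2 * (∑ β ∈ D.roots, |β ν|) - 2 * (∑ β ∈ D.roots, |β μ|) := by
    simp only [hgdef]
    rw [Finset.sum_sub_distrib, Finset.sum_add_distrib, Finset.sum_add_distrib,
      hsumσ ν, hsumσ μ]
    ring
  have hneg_mem : ∀ β ∈ D.roots, -β ∈ D.roots := by
    intro β hβ
    have h' := D.reflection_mem β hβ β hβ
    rw [D.coroot_self β hβ] at h'
    have e : β - (2 : ℝ) • β = -β := by module
    rwa [e] at h'
  have hroots : D.roots = D.pos ∪ D.pos.image (fun β => -β) := by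
    ext β
    constructor
    · intro hβ
      rcases D.pos_or_neg β hβ with hp | hp
      · exact Finset.mem_union_left _ hp
      · exact Finset.mem_union_right _ (Finset.mem_image.mpr ⟨-β, hp, by simp⟩)
    · intro hβ
      rcases Finset.mem_union.mp hβ with hp | hp
      · exact D.pos_subset hp
      · rcases Finset.mem_image.mp hp with ⟨γ, hγ, rfl⟩
        exact hneg_mem γ (D.pos_subset hγ)
  have hdisj : Disjoint D.pos (D.pos.image (fun β => -β)) := by
    rw [Finset.disjoint_left]
    intro β hβ hβ'
    rcases Finset.mem_image.mp hβ' with ⟨γ, hγ, rfl⟩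
    exact D.pos_not_neg (-γ) hβ (by simpa using hγ)
  have hdouble : ∀ v : V, ∑ β ∈ D.roots, |β v| = 2 * D.coLen v := by
    intro v
    rw [hroots, Finset.sum_union hdisj,
      Finset.sum_image (by intro x _ y _ hxy; simpa using hxy)]
    simp only [LinearMap.neg_apply, abs_neg]
    rw [RootSystemData.coLen]
    ring
  rw [hdouble ν, hdouble μ] at hsumg
  have hne : α ≠ -α := by
    intro h
    have h2 := congrArg (fun f : Module.Dual ℝ V => f (D.coroot α)) h
    simp only [LinearMap.neg_apply, hco] at h2
    norm_num at h2
  have hσnegα : σ (-α) = α := by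
    show (-α) - (-α) (D.coroot α) • α = α
    rw [LinearMap.neg_apply, hco]
    module
  have hvalnegα : g (-α) = g α := by
    simp only [hgdef, hσnegα, hσα, LinearMap.neg_apply, abs_neg]
  have hsub : ({α, -α} : Finset (Module.Dual ℝ V)) ⊆ D.roots := by
    intro x hx
    rcases Finset.mem_insert.mp hx with rfl | hx
    · exact hαr
    · rw [Finset.mem_singleton.mp hx]
      exact hneg_mem α hαr
  have hpair : g α + g (-α) ≤ ∑ β ∈ D.roots, g β := by
    rw [← Finset.sum_pair hne]
    exact Finset.sum_le_sum_of_subset_of_nonneg hsub (fun β _ _ => hnonneg β)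
  rw [hvalnegα, hvalα, hsumg] at hpair
  linarith [hmin, hpair]
end

section
/- With notation as before (ν with ⟨ν,α⟩ > 0, 0 ≤ k ≤ ⟨ν,α⟩, μ = ν − k·α̌, ℓ(v) = Σ_{β∈Σ⁺}|⟨v,β⟩|), the equality ℓ(ν) = ℓ(μ) + 2·min{k, ⟨ν,α⟩ − k} holds if and only if k = 0, or k = ⟨ν,α⟩, or there exists w in the Weyl group W such that w(ν) is dominant and w(α) is a simple root. -/
open Module

variable {V : Type} [AddCommGroup V] [Module ℝ V]

/-!
Put `p = k / ⟨ν, α⟩`, so that `μ = (1 - p) ν + p s_α ν` and `s_α μ = p ν + (1 - p) s_α ν`. As `ℓ` is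
`W`-invariant, `2 ℓ(v) = Σ_{β > 0} (|⟨v, β⟩| + |⟨s_α v, β⟩|)`, and by the triangle inequality every
positive root contributes at least as much to `2 ℓ(ν)` as to `2 ℓ(μ)`, with equality iff `⟨ν, β⟩`
and `⟨s_α ν, β⟩` do not have opposite signs; the root `α` itself accounts for exactly
`4 min{k, ⟨ν, α⟩ - k}`. Hence for `0 < k < ⟨ν, α⟩` the equality says that no positive root other
than `α` separates `ν` from `s_α ν`.

This separation condition is `W`-equivariant. If `w ν` is dominant and `w α = γ` is simple, it
holds because `s_γ` permutes the positive roots other than `γ`. Conversely, simple reflections make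
`ν` dominant; then, while `α = b + c` is not simple, the condition provides a positive root `δ` with
`⟨ν, δ⟩ = 0 < ⟨α^∨, δ⟩`, and `s_δ` fixes `ν` and moves `α` down in the cone of positive roots.

The root-system input is the rank-two bound `0 < ⟨β^∨, δ⟩ ⟨δ^∨, β⟩ < 4` for non-proportional roots
with `⟨δ^∨, β⟩ ≠ 0`: otherwise `s_δ s_β` would produce infinitely many roots. It gives unbroken root
strings and the non-vanishing of nonempty sums of positive roots.
-/

theorem strictMono_abs_of_recurrence {t : ℝ} (ht : 2 ≤ |t|) {y : ℕ → ℝ} (h0 : y 0 = 0)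
    (h1 : y 1 ≠ 0) (hrec : ∀ n, y (n + 2) = t * y (n + 1) - y n) :
    StrictMono fun n => |y n| := by
  have hgap : ∀ n, |y n| + |y 1| ≤ |y (n + 1)| := by
    intro n
    induction n with
    | zero => simp [h0]
    | succ n ih =>
      have : |t| * |y (n + 1)| - |y n| ≤ |y (n + 2)| := by
        rw [hrec, ← abs_mul]
        exact abs_sub_abs_le_abs_sub _ _
      nlinarith [abs_nonneg (y (n + 1))]
  exact strictMono_nat_of_lt_succ fun n => by linarith [hgap n, abs_pos.mpr h1]

section AbsConvexity

def absMixDefect (p x y : ℝ) : ℝ :=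
  |x| + |y| - (|(1 - p) * x + p * y| + |p * x + (1 - p) * y|)

variable {a b p : ℝ}

theorem abs_mul_add_mul_le (ha : 0 ≤ a) (hb : 0 ≤ b) (x y : ℝ) :
    |a * x + b * y| ≤ a * |x| + b * |y| := by
  simpa only [abs_mul, abs_of_nonneg ha, abs_of_nonneg hb] using abs_add_le (a * x) (b * y)

theorem abs_mul_add_mul_eq_iff (ha : 0 < a) (hb : 0 < b) (x y : ℝ) :
    |a * x + b * y| = a * |x| + b * |y| ↔ 0 ≤ x * y := by
  have hneg : ∀ {c z : ℝ}, 0 < c → (c * z ≤ 0 ↔ z ≤ 0) := fun {c z} hc => by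
    simpa using mul_nonneg_iff_of_pos_left (b := -z) hc
  have h := abs_add_eq_add_abs_iff (a * x) (b * y)
  rw [abs_mul, abs_mul, abs_of_pos ha, abs_of_pos hb] at h
  rw [h, mul_nonneg_iff_of_pos_left ha, mul_nonneg_iff_of_pos_left hb, hneg ha, hneg hb,
    mul_nonneg_iff]

theorem absMixDefect_nonneg (hp₀ : 0 ≤ p) (hp₁ : p ≤ 1) (x y : ℝ) : 0 ≤ absMixDefect p x y := by
  have h₁ := abs_mul_add_mul_le (sub_nonneg.mpr hp₁) hp₀ x y
  have h₂ := abs_mul_add_mul_le hp₀ (sub_nonneg.mpr hp₁) x y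
  rw [absMixDefect]
  linarith

theorem absMixDefect_eq_zero_iff (hp₀ : 0 < p) (hp₁ : p < 1) (x y : ℝ) :
    absMixDefect p x y = 0 ↔ 0 ≤ x * y := by
  have h₁ := abs_mul_add_mul_le (sub_pos.mpr hp₁).le hp₀.le x y
  have h₂ := abs_mul_add_mul_le hp₀.le (sub_pos.mpr hp₁).le x y
  rw [absMixDefect]
  constructor
  · intro h
    exact (abs_mul_add_mul_eq_iff (sub_pos.mpr hp₁) hp₀ x y).mp (by linarith)
  · intro h
    rw [(abs_mul_add_mul_eq_iff (sub_pos.mpr hp₁) hp₀ x y).mpr h,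
      (abs_mul_add_mul_eq_iff hp₀ (sub_pos.mpr hp₁) x y).mpr h]
    ring

theorem absMixDefect_self_neg {c : ℝ} (hc : 0 ≤ c) (p : ℝ) :
    absMixDefect p c (-c) = 4 * min (p * c) (c - p * c) := by
  have h₁ : (1 - p) * c + p * -c = c - 2 * (p * c) := by ring
  have h₂ : p * c + (1 - p) * -c = -(c - 2 * (p * c)) := by ring
  rw [absMixDefect, h₁, h₂, abs_neg, abs_neg, abs_of_nonneg hc]
  rcases le_total (p * c) (c - p * c) with h | h
  · rw [min_eq_left h, abs_of_nonneg (by linarith)]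
    ring
  · rw [min_eq_right h, abs_of_nonpos (by linarith)]
    ring

end AbsConvexity

@[simp]
theorem dualAct_apply_apply (w : V ≃ₗ[ℝ] V) (β : Module.Dual ℝ V) (v : V) :
    dualAct w β (w v) = β v := by
  simp [dualAct]

theorem dualAct_mul (w w' : V ≃ₗ[ℝ] V) (β : Module.Dual ℝ V) :
    dualAct (w * w') β = dualAct w (dualAct w' β) := rfl

@[simp]
theorem dualAct_inv_apply (w : V ≃ₗ[ℝ] V) (β : Module.Dual ℝ V) (v : V) :
    dualAct w⁻¹ β v = β (w v) := rfl

@[simp]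
theorem dualAct_dualAct_inv (w : V ≃ₗ[ℝ] V) (β : Module.Dual ℝ V) :
    dualAct w (dualAct w⁻¹ β) = β := by
  rw [← dualAct_mul, mul_inv_cancel]
  rfl

@[simp]
theorem dualAct_inv_dualAct (w : V ≃ₗ[ℝ] V) (β : Module.Dual ℝ V) :
    dualAct w⁻¹ (dualAct w β) = β := by
  rw [← dualAct_mul, inv_mul_cancel]
  rfl

theorem dualAct_injective (w : V ≃ₗ[ℝ] V) : Function.Injective (dualAct w) :=
  Function.LeftInverse.injective (dualAct_inv_dualAct w)

@[simp]
theorem dualAct_neg (w : V ≃ₗ[ℝ] V) (β : Module.Dual ℝ V) : dualAct w (-β) = -dualAct w β := rfl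

@[simp]
theorem dualAct_sub (w : V ≃ₗ[ℝ] V) (β γ : Module.Dual ℝ V) :
    dualAct w (β - γ) = dualAct w β - dualAct w γ := rfl

@[simp]
theorem dualAct_smul (w : V ≃ₗ[ℝ] V) (t : ℝ) (β : Module.Dual ℝ V) :
    dualAct w (t • β) = t • dualAct w β := rfl

namespace RootSystemData

variable {D : RootSystemData V} {α β γ δ ε φ : Module.Dual ℝ V} {ν : V}

section Reflections

variable (D)

theorem sRef_apply (h : α ∈ D.roots) (v : V) : D.sRef α h v = v - α v • D.coroot α := rfl

@[simp]
theorem sRef_sRef (h : α ∈ D.roots) (v : V) : D.sRef α h (D.sRef α h v) = v :=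
  (D.sRef α h).symm_apply_apply v

theorem apply_sRef_self (h : α ∈ D.roots) (v : V) : α (D.sRef α h v) = -α v := by
  rw [sRef_apply, map_sub, map_smul, D.coroot_self α h, smul_eq_mul]
  ring

theorem sRef_inv (h : α ∈ D.roots) : (D.sRef α h)⁻¹ = D.sRef α h :=
  inv_eq_of_mul_eq_one_right (LinearEquiv.ext (D.sRef_sRef h))

theorem sRef_mem_weylGroup (h : α ∈ D.roots) : D.sRef α h ∈ D.weylGroup :=
  Subgroup.subset_closure ⟨α, h, rfl⟩

theorem dualAct_sRef (h : α ∈ D.roots) (β : Module.Dual ℝ V) :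
    dualAct (D.sRef α h) β = β - β (D.coroot α) • α := by
  ext v
  rw [← D.sRef_inv h, dualAct_inv_apply, sRef_apply]
  simp [mul_comm]

end Reflections

theorem neg_mem_roots (h : β ∈ D.roots) : -β ∈ D.roots := by
  have := D.reflection_mem β h β h
  rwa [D.coroot_self β h, two_smul, sub_add_cancel_left] at this

theorem neg_mem_pos_of_not_mem_pos (h : β ∈ D.roots) (hβ : β ∉ D.pos) : -β ∈ D.pos :=
  (D.pos_or_neg β h).resolve_left hβ

theorem ne_neg_of_mem_pos (hβ : β ∈ D.pos) (hγ : γ ∈ D.pos) : β ≠ -γ := by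
  rintro rfl
  exact D.pos_not_neg γ hγ hβ

theorem dualAct_mem_roots {w : V ≃ₗ[ℝ] V} (hw : w ∈ D.weylGroup) (hβ : β ∈ D.roots) :
    dualAct w β ∈ D.roots := by
  induction hw using Subgroup.closure_induction'' generalizing β with
  | mem _ hs =>
    obtain ⟨α, hα, rfl⟩ := hs
    rw [D.dualAct_sRef hα]
    exact D.reflection_mem α hα β hβ
  | inv_mem _ hs =>
    obtain ⟨α, hα, rfl⟩ := hs
    rw [D.sRef_inv hα, D.dualAct_sRef hα]
    exact D.reflection_mem α hα β hβ
  | one => exact hβ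
  | mul _ _ _ _ hx hy => exact hx (hy hβ)

theorem linearIndependent_of_ne (hβ : β ∈ D.roots) (hγ : γ ∈ D.roots) (h₁ : β ≠ γ)
    (h₂ : β ≠ -γ) : LinearIndependent ℝ ![β, γ] := by
  rw [LinearIndependent.pair_symm_iff, LinearIndependent.pair_iff' (D.root_ne_zero γ hγ)]
  rintro t rfl
  rcases D.reduced γ hγ t hβ with rfl | rfl
  · exact h₁ (one_smul ℝ γ)
  · exact h₂ (neg_one_smul ℝ γ)

theorem linearIndependent_of_mem_pos (hβ : β ∈ D.pos) (hγ : γ ∈ D.pos) (h : β ≠ γ) :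
    LinearIndependent ℝ ![β, γ] :=
  linearIndependent_of_ne (D.pos_subset hβ) (D.pos_subset hγ) h (ne_neg_of_mem_pos hβ hγ)

theorem not_injective_of_forall_mem_roots (f : ℕ → Module.Dual ℝ V) (hf : ∀ n, f n ∈ D.roots) :
    ¬ Function.Injective f := fun hinj =>
  not_injective_infinite_finite (fun n => (⟨f n, hf n⟩ : D.roots))
    fun _ _ h => hinj (congrArg Subtype.val h)

/-- Composing the reflection `ε ↦ ε - ε c • β` with `s_β` translates each root `ε` by
`(ε (β^∨) - ε c) • β`, and this translation can be iterated; finiteness forces it to vanish. -/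
theorem apply_eq_apply_coroot (hβ : β ∈ D.roots) {c : V} (hc : β c = 2)
    (hrefl : ∀ φ ∈ D.roots, φ - φ c • β ∈ D.roots) (hε : ε ∈ D.roots) :
    ε c = ε (D.coroot β) := by
  by_contra hne
  set d := ε (D.coroot β) - ε c
  have hd : d ≠ 0 := sub_ne_zero.mpr (Ne.symm hne)
  have hshift : ∀ φ ∈ D.roots, φ + (φ (D.coroot β) - φ c) • β ∈ D.roots := by
    intro φ hφ
    convert hrefl _ (D.reflection_mem β hβ φ hφ) using 1
    simp only [LinearMap.sub_apply, LinearMap.smul_apply, smul_eq_mul, hc]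
    module
  have hmem : ∀ n : ℕ, ε + (n * d) • β ∈ D.roots := by
    intro n
    induction n with
    | zero => simpa using hε
    | succ n ih =>
      convert hshift _ ih using 1
      simp only [LinearMap.add_apply, LinearMap.smul_apply, smul_eq_mul, hc,
        D.coroot_self β hβ, d]
      push_cast
      module
  refine not_injective_of_forall_mem_roots _ hmem fun m n hmn => ?_
  have := smul_left_injective ℝ (D.root_ne_zero β hβ) (add_left_cancel hmn)
  exact_mod_cast mul_right_cancel₀ hd this

theorem apply_coroot_dualAct {w : V ≃ₗ[ℝ] V} (hw : w ∈ D.weylGroup) (hδ : δ ∈ D.roots)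
    (hε : ε ∈ D.roots) : dualAct w ε (D.coroot (dualAct w δ)) = ε (D.coroot δ) := by
  have hrefl : ∀ φ ∈ D.roots, φ - φ (w (D.coroot δ)) • dualAct w δ ∈ D.roots := by
    intro φ hφ
    have := dualAct_mem_roots hw
      (D.reflection_mem δ hδ _ (dualAct_mem_roots (inv_mem hw) hφ))
    simpa using this
  rw [← apply_eq_apply_coroot (dualAct_mem_roots hw hδ) (by simpa using D.coroot_self δ hδ)
    hrefl (dualAct_mem_roots hw hε), dualAct_apply_apply]

/-- Coefficients of `(s_δ s_β)ⁿ β` in terms of `β` and `δ`, where `a = β(δ^∨)` and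
`b = δ(β^∨)`. -/
def dihedralCoeff (a b : ℝ) : ℕ → ℝ × ℝ
  | 0 => (1, 0)
  | n + 1 => (-(dihedralCoeff a b n).1 - b * (dihedralCoeff a b n).2,
      a * (dihedralCoeff a b n).1 + (a * b - 1) * (dihedralCoeff a b n).2)

theorem dihedralCoeff_snd_add_two (a b : ℝ) (n : ℕ) :
    (dihedralCoeff a b (n + 2)).2 =
      (a * b - 2) * (dihedralCoeff a b (n + 1)).2 - (dihedralCoeff a b n).2 := by
  simp only [dihedralCoeff]
  ring

/-- If `a * b ∉ (0, 4)`, the trace `a * b - 2` of `s_δ s_β` on the plane of `β, δ` has absolute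
value at least `2`, so the `δ`-coefficients of `(s_δ s_β)ⁿ β` grow without bound. -/
theorem pairing_mul_pairing_mem_Ioo (hβ : β ∈ D.roots) (hδ : δ ∈ D.roots)
    (hind : LinearIndependent ℝ ![β, δ]) (ha : β (D.coroot δ) ≠ 0) :
    β (D.coroot δ) * δ (D.coroot β) ∈ Set.Ioo 0 4 := by
  set a := β (D.coroot δ)
  set b := δ (D.coroot β)
  set coeff := dihedralCoeff a b
  have hmem : ∀ n, (coeff n).1 • β + (coeff n).2 • δ ∈ D.roots := by
    intro n
    induction n with
    | zero => simpa [coeff, dihedralCoeff] using hβ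
    | succ n ih =>
      convert D.reflection_mem δ hδ _ (D.reflection_mem β hβ _ ih) using 1
      simp only [coeff, dihedralCoeff, LinearMap.add_apply, LinearMap.sub_apply,
        LinearMap.smul_apply, smul_eq_mul, D.coroot_self β hβ, D.coroot_self δ hδ]
      module
  by_contra hout
  have ht : 2 ≤ |a * b - 2| := by
    rcases not_and_or.mp hout with h | h
    · rw [abs_of_neg (by linarith [not_lt.mp h])]
      linarith [not_lt.mp h]
    · rw [abs_of_nonneg (by linarith [not_lt.mp h])]
      linarith [not_lt.mp h]
  have hmono := strictMono_abs_of_recurrence ht (y := fun n => (coeff n).2)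
    (by simp [coeff, dihedralCoeff]) (by simpa [coeff, dihedralCoeff])
    (dihedralCoeff_snd_add_two a b)
  refine not_injective_of_forall_mem_roots _ hmem fun m n hmn => hmono.injective ?_
  have := LinearIndependent.pair_iff.mp hind ((coeff m).1 - (coeff n).1)
    ((coeff m).2 - (coeff n).2)
    (by rw [sub_smul, sub_smul, sub_add_sub_comm, hmn, sub_self])
  simp only [sub_eq_zero.mp this.2]

theorem sub_mem_roots_of_pairing_pos (hβ : β ∈ D.roots) (hδ : δ ∈ D.roots)
    (hind : LinearIndependent ℝ ![β, δ]) (h : 0 < β (D.coroot δ)) : β - δ ∈ D.roots := by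
  obtain ⟨hpos, hlt⟩ := pairing_mul_pairing_mem_Ioo hβ hδ hind h.ne'
  obtain ⟨m, hm⟩ := D.crystallographic δ hδ β hβ
  obtain ⟨n, hn⟩ := D.crystallographic β hβ δ hδ
  rw [hm, hn] at hpos hlt
  rw [hm] at h
  have hm0 : 0 < m := by exact_mod_cast h
  have hn0 : 0 < n := pos_of_mul_pos_right (by exact_mod_cast hpos : 0 < m * n) hm0.le
  have hmn : m * n < 4 := by exact_mod_cast hlt
  obtain rfl | rfl : m = 1 ∨ n = 1 := by
    by_contra! h
    nlinarith [(by omega : 2 ≤ m), (by omega : 2 ≤ n)]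
  · simpa [hm] using D.reflection_mem δ hδ β hβ
  · simpa [hn] using neg_mem_roots (D.reflection_mem β hβ δ hδ)

theorem add_mem_roots_of_pairing_neg (hβ : β ∈ D.roots) (hδ : δ ∈ D.roots)
    (hind : LinearIndependent ℝ ![β, δ]) (h : β (D.coroot δ) < 0) : β + δ ∈ D.roots := by
  have := sub_mem_roots_of_pairing_pos (neg_mem_roots hβ) hδ
    (LinearIndependent.pair_neg_left_iff.mpr hind) (by simpa using h)
  simpa [add_comm] using neg_mem_roots this

/-- A step down from a root `β - i • γ` with `0 < (β - i • γ)(γ^∨)` is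
`sub_mem_roots_of_pairing_pos`; any other step is the `s_γ`-mirror of an earlier one. -/
theorem sub_smul_mem_roots (hβ : β ∈ D.roots) (hγ : γ ∈ D.roots)
    (hind : LinearIndependent ℝ ![β, γ]) {M : ℕ} (hM : β (D.coroot γ) = M) :
    ∀ j ≤ M, β - (j : ℝ) • γ ∈ D.roots := by
  intro j
  induction j using Nat.strong_induction_on with
  | _ j ih =>
  intro hj
  rcases j with _ | i
  · simpa using hβ
  by_cases h2i : 2 * i < M
  · have hφ := ih i (by omega) (by omega)
    have hind' : LinearIndependent ℝ ![β - (i : ℝ) • γ, γ] := by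
      rw [show β - (i : ℝ) • γ = β + (-(i : ℝ)) • γ by module]
      exact (LinearIndependent.pair_add_smul_left_iff _).mpr hind
    have hpos : 0 < (β - (i : ℝ) • γ) (D.coroot γ) := by
      simp only [LinearMap.sub_apply, LinearMap.smul_apply, smul_eq_mul, hM,
        D.coroot_self γ hγ]
      have : (2 * i : ℝ) < M := by exact_mod_cast h2i
      linarith
    convert sub_mem_roots_of_pairing_pos hφ hγ hind' hpos using 1
    push_cast
    module
  · have hψ := ih (M - (i + 1)) (by omega) (by omega)
    convert D.reflection_mem γ hγ _ hψ using 1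
    simp only [LinearMap.sub_apply, LinearMap.smul_apply, smul_eq_mul, hM,
      D.coroot_self γ hγ, Nat.cast_sub hj]
    push_cast
    module

theorem sub_mem_pos_of_isSimpleRoot (hγ : D.IsSimpleRoot γ) (hφ : φ ∈ D.pos)
    (h : φ - γ ∈ D.roots) : φ - γ ∈ D.pos := by
  by_contra hn
  exact hγ.2 ⟨φ, hφ, -(φ - γ), neg_mem_pos_of_not_mem_pos h hn, by abel⟩

theorem add_smul_mem_pos {s : Module.Dual ℝ V}
    (hstep : ∀ φ ∈ D.pos, φ + s ∈ D.roots → φ + s ∈ D.pos) (hβ : β ∈ D.pos) {n : ℕ}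
    (hroots : ∀ j ≤ n, β + (j : ℝ) • s ∈ D.roots) : β + (n : ℝ) • s ∈ D.pos := by
  induction n with
  | zero => simpa using hβ
  | succ n ih =>
    have := hstep _ (ih fun j hj => hroots j (by omega))
      (by simpa [add_smul, add_assoc] using hroots (n + 1) le_rfl)
    simpa [add_smul, add_assoc] using this

/-- Walk along the `γ`-string from `β` to `s_γ β`. Going down, a first negative root would split
`γ` into two positive roots; going up, adding `γ` keeps roots positive. -/
theorem reflect_mem_pos_of_isSimpleRoot (hγ : D.IsSimpleRoot γ) (hβ : β ∈ D.pos)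
    (hne : β ≠ γ) : β - β (D.coroot γ) • γ ∈ D.pos := by
  have hγr := D.pos_subset hγ.1
  have hβr := D.pos_subset hβ
  have hind := linearIndependent_of_mem_pos hβ hγ.1 hne
  obtain ⟨M, hM⟩ := D.crystallographic γ hγr β hβr
  obtain ⟨n, rfl | rfl⟩ := Int.eq_nat_or_neg M
  · have := add_smul_mem_pos (s := -γ)
      (fun φ hφ h => by
        simpa [sub_eq_add_neg] using
          sub_mem_pos_of_isSimpleRoot hγ hφ (by simpa [sub_eq_add_neg] using h))
      hβ (n := n) (fun j hj => by
        simpa [sub_eq_add_neg] using sub_smul_mem_roots hβr hγr hind (by simpa using hM) j hj)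
    simpa [hM, sub_eq_add_neg] using this
  · have := add_smul_mem_pos (s := γ) (fun φ hφ h => D.pos_add φ hφ γ hγ.1 h) hβ (n := n)
      (fun j hj => by
        simpa [add_comm] using neg_mem_roots (sub_smul_mem_roots (neg_mem_roots hβr) hγr
          (LinearIndependent.pair_neg_left_iff.mpr hind) (by simp [hM]) j hj))
    rw [hM]
    convert this using 1
    push_cast
    module

def posCone (D : RootSystemData V) : AddSubmonoid (Module.Dual ℝ V) := AddSubmonoid.closure D.pos

open scoped Classical in
noncomputable def numPosBelow (D : RootSystemData V) (α : Module.Dual ℝ V) : ℕ :=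
  (D.pos.filter fun β => α - β ∈ D.posCone).card

theorem mem_posCone (h : β ∈ D.pos) : β ∈ D.posCone := AddSubmonoid.subset_closure h

theorem exists_add_mem_pos_of_sum_eq_neg {x : Module.Dual ℝ V} (hx : x ∈ D.pos)
    {l : Multiset (Module.Dual ℝ V)} (hl : ∀ y ∈ l, y ∈ D.pos) (hsum : l.sum = -x) :
    ∃ y ∈ l, y + x ∈ D.pos := by
  have hxr := D.pos_subset hx
  have hval : (l.map fun y => y (D.coroot x)).sum = -2 := by
    rw [← D.coroot_self x hxr, ← LinearMap.neg_apply, ← hsum]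
    exact (map_multiset_sum (Module.Dual.eval ℝ V (D.coroot x)) l).symm
  obtain ⟨y, hy, hyx⟩ : ∃ y ∈ l, y (D.coroot x) < 0 := by
    by_contra! h
    have := Multiset.sum_nonneg fun z hz => by
      obtain ⟨y, hy, rfl⟩ := Multiset.mem_map.mp hz
      exact h y hy
    linarith
  have hyx_ne : y ≠ x := by
    rintro rfl
    linarith [D.coroot_self y hxr]
  exact ⟨y, hy, D.pos_add y (hl y hy) x hx (add_mem_roots_of_pairing_neg (D.pos_subset (hl y hy))
    hxr (linearIndependent_of_mem_pos (hl y hy) hx hyx_ne) hyx)⟩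

/-- Merging `x` with the `y` of `exists_add_mem_pos_of_sum_eq_neg` shortens a vanishing sum. -/
theorem multiset_sum_ne_zero {l : Multiset (Module.Dual ℝ V)} (hl : ∀ x ∈ l, x ∈ D.pos)
    (hne : l ≠ 0) : l.sum ≠ 0 := by
  classical
  induction hn : Multiset.card l using Nat.strong_induction_on generalizing l with
  | _ n ih =>
  obtain ⟨x, hxl⟩ := Multiset.exists_mem_of_ne_zero hne
  obtain ⟨l', rfl⟩ := Multiset.exists_cons_of_mem hxl
  have hx := hl x (Multiset.mem_cons_self x l')
  have hl' : ∀ y ∈ l', y ∈ D.pos := fun y hy => hl y (Multiset.mem_cons_of_mem hy)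
  intro hsum
  rw [Multiset.sum_cons, add_eq_zero_iff_eq_neg'] at hsum
  obtain ⟨y, hy, hmerge⟩ := exists_add_mem_pos_of_sum_eq_neg hx hl' hsum
  refine ih _ ?_ (l := (y + x) ::ₘ l'.erase y) ?_ Multiset.cons_ne_zero rfl ?_
  · rw [← hn, Multiset.card_cons, Multiset.card_cons, ← Multiset.card_erase_add_one hy]
    omega
  · intro z hz
    rcases Multiset.mem_cons.mp hz with rfl | hz
    exacts [hmerge, hl' z (Multiset.mem_of_mem_erase hz)]
  · rw [Multiset.sum_cons, add_comm y x, add_assoc, ← Multiset.sum_cons, Multiset.cons_erase hy,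
      hsum, add_neg_cancel]

theorem eq_zero_of_mem_posCone_of_neg_mem {v : Module.Dual ℝ V} (hv : v ∈ D.posCone)
    (hv' : -v ∈ D.posCone) : v = 0 := by
  obtain ⟨l, hl, rfl⟩ := AddSubmonoid.exists_multiset_of_mem_closure hv
  obtain ⟨l', hl', hsum'⟩ := AddSubmonoid.exists_multiset_of_mem_closure hv'
  by_contra hne
  refine multiset_sum_ne_zero (D := D) (l := l + l') (fun x hx => ?_) ?_ ?_
  · rcases Multiset.mem_add.mp hx with h | h
    exacts [hl x h, hl' x h]
  · rintro h
    exact hne (by rw [(add_eq_zero.mp h).1, Multiset.sum_zero])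
  · rw [Multiset.sum_add, hsum', add_neg_cancel]

open scoped Classical in
theorem numPosBelow_lt (hα : α ∈ D.pos) (hne : β ≠ α) (h : α - β ∈ D.posCone) :
    D.numPosBelow β < D.numPosBelow α := by
  refine Finset.card_lt_card ⟨fun γ hγ => ?_, fun hsub => ?_⟩
  · rw [Finset.mem_filter] at hγ ⊢
    exact ⟨hγ.1, by simpa using add_mem h hγ.2⟩
  · have hαβ := (Finset.mem_filter.mp (hsub (Finset.mem_filter.mpr ⟨hα, by simp [zero_mem]⟩))).2
    exact hne (sub_eq_zero.mp (eq_zero_of_mem_posCone_of_neg_mem h (by simpa using hαβ))).symm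

theorem numPosBelow_lt_of_eq_add {b c : Module.Dual ℝ V} (hα : α ∈ D.pos) (hc : c ∈ D.pos)
    (h : α = b + c) : D.numPosBelow b < D.numPosBelow α := by
  refine numPosBelow_lt hα ?_ (by simpa [h] using mem_posCone hc)
  rw [h]
  exact left_ne_add.mpr (D.root_ne_zero c (D.pos_subset hc))

theorem exists_isSimpleRoot_apply_neg {ν : V} (hβ : β ∈ D.pos) (hν : β ν < 0) :
    ∃ γ, D.IsSimpleRoot γ ∧ γ ν < 0 := by
  induction hn : D.numPosBelow β using Nat.strong_induction_on generalizing β with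
  | _ n ih =>
  by_cases hs : D.IsSimpleRoot β
  · exact ⟨β, hs, hν⟩
  obtain ⟨b, hb, c, hc, rfl⟩ := not_not.mp (not_and.mp hs hβ)
  rcases lt_or_ge (b ν) 0 with hbν | hbν
  · exact ih _ (hn ▸ numPosBelow_lt_of_eq_add hβ hc rfl) hb hbν rfl
  · have hcν : c ν < 0 := by simp only [LinearMap.add_apply] at hν; linarith
    exact ih _ (hn ▸ numPosBelow_lt_of_eq_add hβ hb (add_comm b c)) hc hcν rfl

/-- No positive root other than `α` separates `ν` from `s_α ν = ν - α ν • α^∨`. -/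
def IsOnlySeparatingRoot (D : RootSystemData V) (ν : V) (α : Module.Dual ℝ V) : Prop :=
  ∀ β ∈ D.pos, β ≠ α → 0 ≤ β ν * β (ν - α ν • D.coroot α)

open scoped Classical in
noncomputable def negCount (D : RootSystemData V) (ν : V) : ℕ :=
  (D.pos.filter fun β => β ν < 0).card

theorem IsOnlySeparatingRoot.of_mem_roots (h : D.IsOnlySeparatingRoot ν α) (hβ : β ∈ D.roots)
    (h₁ : β ≠ α) (h₂ : β ≠ -α) : 0 ≤ β ν * β (ν - α ν • D.coroot α) := by
  rcases D.pos_or_neg β hβ with hp | hp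
  · exact h β hp h₁
  · have := h (-β) hp fun h' => h₂ (neg_eq_iff_eq_neg.mp h')
    simpa only [LinearMap.neg_apply, neg_mul_neg] using this

theorem IsOnlySeparatingRoot.map {w : V ≃ₗ[ℝ] V} (h : D.IsOnlySeparatingRoot ν α)
    (hw : w ∈ D.weylGroup) (hα : α ∈ D.roots) (hwα : dualAct w α ∈ D.pos) :
    D.IsOnlySeparatingRoot (w ν) (dualAct w α) := by
  intro β hβ hne
  obtain ⟨B, hB, rfl⟩ : ∃ B ∈ D.roots, dualAct w B = β :=
    ⟨_, dualAct_mem_roots (inv_mem hw) (D.pos_subset hβ), dualAct_dualAct_inv w β⟩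
  have := h.of_mem_roots hB (fun h' => hne (h' ▸ rfl))
    fun h' => ne_neg_of_mem_pos hβ hwα (by rw [h', dualAct_neg])
  simpa [apply_coroot_dualAct hw hα hB] using this

theorem mem_pos_of_isDominant (hν : D.IsDominant ν) (hβ : β ∈ D.roots) (h : 0 < β ν) :
    β ∈ D.pos := by
  by_contra hn
  have := hν _ (neg_mem_pos_of_not_mem_pos hβ hn)
  simp only [LinearMap.neg_apply, Left.nonneg_neg_iff] at this
  linarith

theorem isOnlySeparatingRoot_of_isDominant (hν : D.IsDominant ν) (hγ : D.IsSimpleRoot γ) :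
    D.IsOnlySeparatingRoot ν γ := by
  intro β hβ hne
  refine mul_nonneg (hν β hβ) ?_
  have := hν _ (reflect_mem_pos_of_isSimpleRoot hγ hβ hne)
  simpa [mul_comm] using this

theorem isOnlySeparatingRoot_of_exists (hα : α ∈ D.pos)
    (h : ∃ w ∈ D.weylGroup, D.IsDominant (w ν) ∧ D.IsSimpleRoot (dualAct w α)) :
    D.IsOnlySeparatingRoot ν α := by
  obtain ⟨w, hw, hdom, hs⟩ := h
  simpa using (isOnlySeparatingRoot_of_isDominant hdom hs).map (inv_mem hw)
    (D.pos_subset hs.1) (by simpa using hα)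

/-- The separation condition for `b` forces `b ν = 0`, or else `c ν = 0` and `b(α^∨) = 1`. -/
theorem exists_orthogonal_of_eq_add_of_one_le (hν : D.IsDominant ν)
    (hsep : D.IsOnlySeparatingRoot ν α) (hα : α ∈ D.roots) {b c : Module.Dual ℝ V}
    (hb : b ∈ D.pos) (hc : c ∈ D.pos) (hbc : α = b + c) (hmb : 1 ≤ b (D.coroot α)) :
    ∃ δ ∈ D.pos, δ ≠ α ∧ δ ν = 0 ∧ 0 < δ (D.coroot α) := by
  have hb_ne : b ≠ α := hbc ▸ left_ne_add.mpr (D.root_ne_zero c (D.pos_subset hc))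
  have hc_ne : c ≠ α := hbc ▸ right_ne_add.mpr (D.root_ne_zero b (D.pos_subset hb))
  have hm : b (D.coroot α) + c (D.coroot α) = 2 := by
    rw [← LinearMap.add_apply, ← hbc, D.coroot_self α hα]
  have hνsum : b ν + c ν = α ν := by rw [← LinearMap.add_apply, ← hbc]
  rcases (hν b hb).eq_or_lt with h0 | h0
  · exact ⟨b, hb, hb_ne, h0.symm, by linarith⟩
  have hsb := hsep b hb hb_ne
  simp only [map_sub, map_smul, smul_eq_mul] at hsb
  have hge : α ν * b (D.coroot α) ≤ b ν := by nlinarith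
  have hcν := hν c hc
  refine ⟨c, hc, hc_ne, ?_, ?_⟩ <;> nlinarith

theorem exists_orthogonal_of_eq_add (hν : D.IsDominant ν) (hsep : D.IsOnlySeparatingRoot ν α)
    (hα : α ∈ D.roots) {b c : Module.Dual ℝ V} (hb : b ∈ D.pos) (hc : c ∈ D.pos)
    (hbc : α = b + c) : ∃ δ ∈ D.pos, δ ≠ α ∧ δ ν = 0 ∧ 0 < δ (D.coroot α) := by
  have hm : b (D.coroot α) + c (D.coroot α) = 2 := by
    rw [← LinearMap.add_apply, ← hbc, D.coroot_self α hα]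
  by_cases hmb : 1 ≤ b (D.coroot α)
  · exact exists_orthogonal_of_eq_add_of_one_le hν hsep hα hb hc hbc hmb
  · exact exists_orthogonal_of_eq_add_of_one_le hν hsep hα hc hb (hbc.trans (add_comm b c))
      (by linarith)

theorem exists_mem_weylGroup_of_isDominant (hν : D.IsDominant ν) (hα : α ∈ D.pos)
    (hαν : 0 < α ν) (hsep : D.IsOnlySeparatingRoot ν α) :
    ∃ w ∈ D.weylGroup, w ν = ν ∧ D.IsSimpleRoot (dualAct w α) := by
  induction hn : D.numPosBelow α using Nat.strong_induction_on generalizing α with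
  | _ n ih =>
  by_cases hs : D.IsSimpleRoot α
  · exact ⟨1, one_mem _, rfl, hs⟩
  have hαr := D.pos_subset hα
  obtain ⟨b, hb, c, hc, hbc⟩ := not_not.mp (not_and.mp hs hα)
  obtain ⟨δ, hδ, hδα, hδν, hδpair⟩ := exists_orthogonal_of_eq_add hν hsep hαr hb hc hbc
  have hδr := D.pos_subset hδ
  have hs_mem := D.sRef_mem_weylGroup hδr
  have hsν : D.sRef δ hδr ν = ν := by simp [sRef_apply, hδν]
  have hαν' : dualAct (D.sRef δ hδr) α ν = α ν := by
    conv_lhs => rw [← hsν]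
    exact dualAct_apply_apply _ α ν
  have hα' : dualAct (D.sRef δ hδr) α ∈ D.pos :=
    mem_pos_of_isDominant hν (dualAct_mem_roots hs_mem hαr) (hαν' ▸ hαν)
  obtain ⟨m, hm⟩ := D.crystallographic δ hδr α hαr
  have hm0 : 0 < m := by
    have := (pairing_mul_pairing_mem_Ioo hδr hαr
      (linearIndependent_of_mem_pos hδ hα hδα) hδpair.ne').1
    rw [hm] at this
    exact_mod_cast pos_of_mul_pos_right this hδpair.le
  lift m to ℕ using hm0.le
  have hlt : D.numPosBelow (dualAct (D.sRef δ hδr) α) < n := by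
    rw [← hn]
    refine numPosBelow_lt hα ?_ ?_ <;> rw [D.dualAct_sRef hδr, hm]
    · rw [Ne, sub_eq_self]
      exact smul_ne_zero (by exact_mod_cast hm0.ne') (D.root_ne_zero δ hδr)
    · rw [sub_sub_cancel, Int.cast_natCast, Nat.cast_smul_eq_nsmul]
      exact nsmul_mem (mem_posCone hδ) m
  obtain ⟨w, hw, hwν, hws⟩ := ih _ hlt hα' (hαν'.symm ▸ hαν)
    (by simpa [hsν] using hsep.map hs_mem hαr hα') rfl
  exact ⟨w * D.sRef δ hδr, mul_mem hw hs_mem, by simp [hsν, hwν], by rwa [dualAct_mul]⟩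

open scoped Classical in
theorem negCount_sRef_lt (hγ : D.IsSimpleRoot γ) (hγν : γ ν < 0) :
    D.negCount (D.sRef γ (D.pos_subset hγ.1) ν) < D.negCount ν := by
  have hγr := D.pos_subset hγ.1
  set s := D.sRef γ hγr
  have hγmem : γ ∈ D.pos.filter fun β => β ν < 0 := Finset.mem_filter.mpr ⟨hγ.1, hγν⟩
  refine (Finset.card_le_card_of_injOn (dualAct s) (fun β hβ => ?_)
    (dualAct_injective s).injOn).trans_lt (Finset.card_erase_lt_of_mem hγmem)
  obtain ⟨hβ, hβν⟩ := Finset.mem_filter.mp hβ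
  have hβγ : β ≠ γ := by
    rintro rfl
    simp [s, sRef_apply, D.coroot_self β hγr] at hβν
    linarith
  have hsγ : dualAct s (-γ) = γ := by
    rw [D.dualAct_sRef hγr, LinearMap.neg_apply, D.coroot_self γ hγr]
    module
  rw [Finset.mem_coe, Finset.mem_erase, Finset.mem_filter]
  refine ⟨fun h => ne_neg_of_mem_pos hβ hγ.1 (dualAct_injective s (h.trans hsγ.symm)), ?_, ?_⟩
  · rw [D.dualAct_sRef hγr]
    exact reflect_mem_pos_of_isSimpleRoot hγ hβ hβγ
  · simpa [s, D.dualAct_sRef hγr, sRef_apply, mul_comm] using hβν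

theorem exists_mem_weylGroup_of_isOnlySeparatingRoot (hα : α ∈ D.pos) (hαν : 0 < α ν)
    (hsep : D.IsOnlySeparatingRoot ν α) :
    ∃ w ∈ D.weylGroup, D.IsDominant (w ν) ∧ D.IsSimpleRoot (dualAct w α) := by
  induction hn : D.negCount ν using Nat.strong_induction_on generalizing ν α with
  | _ n ih =>
  by_cases hdom : D.IsDominant ν
  · obtain ⟨w, hw, hwν, hws⟩ := exists_mem_weylGroup_of_isDominant hdom hα hαν hsep
    exact ⟨w, hw, by rwa [hwν], hws⟩
  obtain ⟨β, hβ, hβν⟩ : ∃ β ∈ D.pos, β ν < 0 := by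
    simpa [IsDominant] using hdom
  obtain ⟨γ, hγ, hγν⟩ := exists_isSimpleRoot_apply_neg hβ hβν
  have hγr := D.pos_subset hγ.1
  have hs_mem := D.sRef_mem_weylGroup hγr
  have hαγ : α ≠ γ := by
    rintro rfl
    linarith
  have hα' : dualAct (D.sRef γ hγr) α ∈ D.pos := by
    rw [D.dualAct_sRef hγr]
    exact reflect_mem_pos_of_isSimpleRoot hγ hα hαγ
  obtain ⟨w, hw, hwdom, hws⟩ := ih _ (hn ▸ negCount_sRef_lt hγ hγν) hα' (by simpa using hαν)
    (hsep.map hs_mem (D.pos_subset hα) hα') rfl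
  exact ⟨w * D.sRef γ hγr, mul_mem hw hs_mem, hwdom, by rwa [dualAct_mul]⟩

theorem isOnlySeparatingRoot_iff_exists (hα : α ∈ D.pos) (hαν : 0 < α ν) :
    D.IsOnlySeparatingRoot ν α ↔
      ∃ w ∈ D.weylGroup, D.IsDominant (w ν) ∧ D.IsSimpleRoot (dualAct w α) :=
  ⟨exists_mem_weylGroup_of_isOnlySeparatingRoot hα hαν, isOnlySeparatingRoot_of_exists hα⟩

theorem sum_roots_abs_eq (v : V) : ∑ β ∈ D.roots, |β v| = 2 * D.coLen v := by
  classical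
  rw [← Finset.sum_filter_add_sum_filter_not D.roots (· ∈ D.pos), two_mul, coLen,
    Finset.filter_mem_eq_inter, Finset.inter_eq_right.mpr D.pos_subset]
  congr 1
  refine Finset.sum_nbij' (-·) (-·) (fun β hβ => ?_) (fun β hβ => ?_) (by simp) (by simp)
    (by simp)
  · obtain ⟨hβr, hβp⟩ := Finset.mem_filter.mp hβ
    exact neg_mem_pos_of_not_mem_pos hβr hβp
  · exact Finset.mem_filter.mpr ⟨neg_mem_roots (D.pos_subset hβ), D.pos_not_neg β hβ⟩

theorem coLen_apply_of_mem_weylGroup {w : V ≃ₗ[ℝ] V} (hw : w ∈ D.weylGroup) (v : V) :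
    D.coLen (w v) = D.coLen v := by
  suffices ∑ β ∈ D.roots, |β (w v)| = ∑ β ∈ D.roots, |β v| by
    rw [sum_roots_abs_eq, sum_roots_abs_eq] at this
    linarith
  exact Finset.sum_nbij' (dualAct w⁻¹) (dualAct w) (fun β hβ => dualAct_mem_roots (inv_mem hw) hβ)
    (fun β hβ => dualAct_mem_roots hw hβ) (by simp) (by simp) (by simp)

theorem two_mul_coLen (hα : α ∈ D.roots) (v : V) :
    2 * D.coLen v = ∑ β ∈ D.pos, (|β v| + |β (D.sRef α hα v)|) := by
  rw [Finset.sum_add_distrib, ← coLen, ← coLen,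
    coLen_apply_of_mem_weylGroup (D.sRef_mem_weylGroup hα), two_mul]

theorem two_mul_coLen_sub_coLen (hα : α ∈ D.roots) {p : ℝ} {μ : V}
    (hμ : μ = (1 - p) • ν + p • D.sRef α hα ν) :
    2 * (D.coLen ν - D.coLen μ) = ∑ β ∈ D.pos, absMixDefect p (β ν) (β (D.sRef α hα ν)) := by
  have hsμ : D.sRef α hα μ = p • ν + (1 - p) • D.sRef α hα ν := by
    rw [hμ, map_add, map_smul, map_smul, sRef_sRef]
    module
  rw [mul_sub, two_mul_coLen hα, two_mul_coLen hα, ← Finset.sum_sub_distrib]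
  refine Finset.sum_congr rfl fun β _ => ?_
  rw [hsμ, hμ]
  simp only [absMixDefect, map_add, map_smul, smul_eq_mul]

theorem coLen_eq_coLen_sub_add_iff (hα : α ∈ D.pos) {k : ℝ} (hk₀ : 0 < k) (hk : k < α ν) :
    D.coLen ν = D.coLen (ν - k • D.coroot α) + 2 * min k (α ν - k) ↔
      D.IsOnlySeparatingRoot ν α := by
  classical
  have hαr := D.pos_subset hα
  have hc : 0 < α ν := hk₀.trans hk
  obtain ⟨p, hpc, hp₀, hp₁⟩ : ∃ p, p * α ν = k ∧ 0 < p ∧ p < 1 :=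
    ⟨k / α ν, div_mul_cancel₀ k hc.ne', div_pos hk₀ hc, (div_lt_one hc).mpr hk⟩
  have hμ : ν - k • D.coroot α = (1 - p) • ν + p • D.sRef α hαr ν := by
    rw [sRef_apply, smul_sub, smul_smul, hpc]
    module
  have hsum := two_mul_coLen_sub_coLen hαr hμ
  rw [← Finset.add_sum_erase _ _ hα, apply_sRef_self, absMixDefect_self_neg hc.le, hpc] at hsum
  trans ∑ β ∈ D.pos.erase α, absMixDefect p (β ν) (β (D.sRef α hαr ν)) = 0
  · constructor <;> intro h <;> linarith
  rw [Finset.sum_eq_zero_iff_of_nonneg fun β _ => absMixDefect_nonneg hp₀.le hp₁.le _ _]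
  refine forall_congr' fun β => ?_
  rw [Finset.mem_erase, and_comm, and_imp, absMixDefect_eq_zero_iff hp₀ hp₁]
  rfl

end RootSystemData

/-- With `α ∈ Σ⁺`, `⟨ν,α⟩ > 0`, `0 ≤ k ≤ ⟨ν,α⟩`, `μ = ν − k·α̌`,
equality `ℓ(ν) = ℓ(μ) + 2·min{k, ⟨ν,α⟩−k}` holds iff `k = 0`, or `k = ⟨ν,α⟩`, or there
is `w` in the Weyl group with `w(ν)` dominant and `w(α)` a simple root. -/
theorem coLen_equality_iff (D : RootSystemData V) (ν : V) (α : Module.Dual ℝ V)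
    (hα : α ∈ D.pos) (hν : 0 < α ν) (k : ℤ) (hk0 : 0 ≤ k) (hk : (k : ℝ) ≤ α ν) :
    D.coLen ν = D.coLen (ν - (k : ℝ) • D.coroot α) + 2 * min (k : ℝ) (α ν - (k : ℝ)) ↔
      (k = 0 ∨ (k : ℝ) = α ν ∨
        ∃ w ∈ D.weylGroup, D.IsDominant (w ν) ∧ D.IsSimpleRoot (dualAct w α)) := by
  rcases hk0.eq_or_lt with rfl | hk₀
  · simp [hν.le]
  rcases hk.eq_or_lt with hkν | hkν
  · have hμ : ν - (k : ℝ) • D.coroot α = D.sRef α (D.pos_subset hα) ν := by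
      rw [hkν, D.sRef_apply]
    rw [hμ, RootSystemData.coLen_apply_of_mem_weylGroup (D.sRef_mem_weylGroup _), hkν, sub_self,
      min_eq_right hν.le]
    simp
  rw [RootSystemData.coLen_eq_coLen_sub_add_iff hα (by exact_mod_cast hk₀) hkν,
    RootSystemData.isOnlySeparatingRoot_iff_exists hα hν]
  simp [hk₀.ne', hkν.ne]
end

section
/- Let Σ be a reduced root system with simple roots Δ and Weyl group W. Suppose ν is dominant, α ∈ Σ⁺, v ∈ W satisfies that v(ν) is dominant and v(α) is a simple root, and k ≥ 0 is an integer with ⟨ν,α⟩ − 2k ≥ 0. Then v(ν − k·α̌) is dominant. -/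
open Module

variable {V : Type} [AddCommGroup V] [Module ℝ V]

/-! Write `σ = v α`, a simple root, and `μ = v ν`, a dominant coweight. The `W`-invariant
form `∑_β β ⊗ β` shows that `v α̌` and `σ̌` agree on every root, so the claim is
`k ⟨β, σ̌⟩ ≤ ⟨β, μ⟩` for `β ∈ Σ⁺`. For `β ≠ σ` and `n = ⟨β, σ̌⟩`, the roots `β - j σ` with
`j ≤ ⌈n/2⌉` are positive: each pairs positively with `σ̌`, so subtracting `σ` gives a root, and
that root is not negative because `σ` is not a sum of two positive roots. Dominance of `μ` at
`β - ⌈n/2⌉ σ` gives `⟨β, μ⟩ ≥ ⌈n/2⌉ ⟨σ, μ⟩ ≥ 2 ⌈n/2⌉ k ≥ n k`. -/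

namespace RootSystemData

variable (D : RootSystemData V)

lemma sRef_apply_s2 {σ : Module.Dual ℝ V} (hσ : σ ∈ D.roots) (x : V) :
    D.sRef σ hσ x = x - σ x • D.coroot σ :=
  rfl

lemma neg_mem_roots_s2 {α : Module.Dual ℝ V} (hα : α ∈ D.roots) : -α ∈ D.roots := by
  have h := D.reflection_mem α hα α hα
  rwa [D.coroot_self α hα, two_smul, sub_add_cancel_left] at h

noncomputable def invForm : LinearMap.BilinForm ℝ V :=
  ∑ β ∈ D.roots, LinearMap.BilinForm.linMulLin β β

lemma invForm_apply (x y : V) : D.invForm x y = ∑ β ∈ D.roots, β x * β y := by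
  simp [invForm, LinearMap.BilinForm.linMulLin_apply]

lemma invForm_isSymm : LinearMap.IsSymm D.invForm :=
  ⟨fun x y => by simp only [invForm_apply, RingHom.id_apply, mul_comm]⟩

lemma invForm_self_nonneg (x : V) : 0 ≤ D.invForm x x := by
  rw [invForm_apply]
  exact Finset.sum_nonneg fun β _ => mul_self_nonneg (β x)

lemma invForm_coroot_self_pos {ρ : Module.Dual ℝ V} (hρ : ρ ∈ D.roots) :
    0 < D.invForm (D.coroot ρ) (D.coroot ρ) := by
  rw [invForm_apply]
  calc (0 : ℝ) < ρ (D.coroot ρ) * ρ (D.coroot ρ) := by rw [D.coroot_self ρ hρ]; norm_num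
    _ ≤ _ := Finset.single_le_sum
      (f := fun β : Module.Dual ℝ V => β (D.coroot ρ) * β (D.coroot ρ))
      (fun β _ => mul_self_nonneg (β (D.coroot ρ))) hρ

lemma apply_eq_zero_of_invForm_self_eq_zero {z : V} (hz : D.invForm z z = 0)
    {ρ : Module.Dual ℝ V} (hρ : ρ ∈ D.roots) : ρ z = 0 := by
  rw [invForm_apply, Finset.sum_eq_zero_iff_of_nonneg fun β _ => mul_self_nonneg (β z)] at hz
  exact mul_self_eq_zero.mp (hz ρ hρ)

lemma invForm_sRef {σ : Module.Dual ℝ V} (hσ : σ ∈ D.roots) (x y : V) :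
    D.invForm (D.sRef σ hσ x) (D.sRef σ hσ y) = D.invForm x y := by
  have reflect_reflect (β : Module.Dual ℝ V) :
      (β - β (D.coroot σ) • σ) - (β - β (D.coroot σ) • σ) (D.coroot σ) • σ = β := by
    simp only [LinearMap.sub_apply, LinearMap.smul_apply, smul_eq_mul, D.coroot_self σ hσ]
    module
  simp only [invForm_apply]
  refine Finset.sum_nbij' (fun β => β - β (D.coroot σ) • σ) (fun β => β - β (D.coroot σ) • σ)
    (fun β hβ => D.reflection_mem σ hσ β hβ) (fun β hβ => D.reflection_mem σ hσ β hβ)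
    (fun β _ => reflect_reflect β) (fun β _ => reflect_reflect β) fun β _ => ?_
  simp only [sRef_apply_s2, map_sub, map_smul, LinearMap.sub_apply, LinearMap.smul_apply,
    smul_eq_mul]
  ring

lemma invForm_weyl {w : V ≃ₗ[ℝ] V} (hw : w ∈ D.weylGroup) (x y : V) :
    D.invForm (w x) (w y) = D.invForm x y := by
  induction hw using Subgroup.closure_induction generalizing x y with
  | mem e he =>
    obtain ⟨σ, hσ, rfl⟩ := he
    exact D.invForm_sRef hσ x y
  | one => rfl
  | mul a b _ _ ha hb => exact (ha (b x) (b y)).trans (hb x y)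
  | inv a _ ha => simpa using (ha (a⁻¹ x) (a⁻¹ y)).symm

lemma apply_mul_invForm_coroot {ρ : Module.Dual ℝ V} (hρ : ρ ∈ D.roots) (x : V) :
    ρ x * D.invForm (D.coroot ρ) (D.coroot ρ) = 2 * D.invForm x (D.coroot ρ) := by
  have h := D.invForm_sRef hρ x (D.coroot ρ)
  simp only [sRef_apply_s2, D.coroot_self ρ hρ, map_sub, map_smul, LinearMap.sub_apply,
    LinearMap.smul_apply, smul_eq_mul] at h
  linarith

lemma pairing_mul_pairing_le_four {α β : Module.Dual ℝ V} (hα : α ∈ D.roots)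
    (hβ : β ∈ D.roots) : β (D.coroot α) * α (D.coroot β) ≤ 4 := by
  set A := D.invForm (D.coroot α) (D.coroot α)
  set B := D.invForm (D.coroot β) (D.coroot β)
  set P := D.invForm (D.coroot β) (D.coroot α)
  have hA : 0 < A := D.invForm_coroot_self_pos hα
  have hB : 0 < B := D.invForm_coroot_self_pos hβ
  have hαβ : α (D.coroot β) * A = 2 * P := D.apply_mul_invForm_coroot hα _
  have hβα : β (D.coroot α) * B = 2 * P := by
    rw [D.apply_mul_invForm_coroot hβ, ← D.invForm_isSymm.eq, RingHom.id_apply]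
  have hCS : P ^ 2 ≤ A * B := by
    rw [mul_comm]
    exact D.invForm.apply_sq_le_of_symm D.invForm_self_nonneg D.invForm_isSymm _ _
  have hAB : (β (D.coroot α) * α (D.coroot β)) * (A * B) = 4 * P ^ 2 := by
    linear_combination (α (D.coroot β) * A) * hβα + 2 * P * hαβ
  nlinarith [mul_pos hA hB]

lemma pairing_pos_of_pairing_pos {α β : Module.Dual ℝ V} (hα : α ∈ D.roots)
    (hβ : β ∈ D.roots) (h : 0 < β (D.coroot α)) : 0 < α (D.coroot β) := by
  have hαβ := D.apply_mul_invForm_coroot hα (D.coroot β)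
  have hβα := D.apply_mul_invForm_coroot hβ (D.coroot α)
  have hsymm : D.invForm (D.coroot α) (D.coroot β) = D.invForm (D.coroot β) (D.coroot α) :=
    D.invForm_isSymm.eq _ _
  have hA := D.invForm_coroot_self_pos hα
  have hB := D.invForm_coroot_self_pos hβ
  have hP : 0 < D.invForm (D.coroot α) (D.coroot β) := by nlinarith
  nlinarith

/-- Otherwise `s_α s_β` would translate `α` by `2 (α - β)`, producing infinitely many roots. -/
lemma eq_of_pairing_eq_two {α β : Module.Dual ℝ V} (hα : α ∈ D.roots) (hβ : β ∈ D.roots)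
    (hβα : β (D.coroot α) = 2) (hαβ : α (D.coroot β) = 2) : α = β := by
  by_contra hne
  set δ : Module.Dual ℝ V := (2 : ℝ) • (α - β)
  set f : ℕ → Module.Dual ℝ V := fun j => α + (j : ℝ) • δ
  have hδ : δ ≠ 0 := smul_ne_zero two_ne_zero (sub_ne_zero.mpr hne)
  have hfβ (j : ℕ) : f j (D.coroot β) = 2 := by
    simp [f, δ, hαβ, D.coroot_self β hβ]
  have hfα (j : ℕ) : (f j - (2 : ℝ) • β) (D.coroot α) = -2 := by
    simp [f, δ, hβα, D.coroot_self α hα]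
    norm_num
  have mem (j : ℕ) : f j ∈ D.roots := by
    induction j with
    | zero => simpa [f] using hα
    | succ j ih =>
      have h := D.reflection_mem α hα _ (D.reflection_mem β hβ _ ih)
      rw [hfβ, hfα] at h
      convert h using 1
      simp only [f, δ]
      push_cast
      module
  have inj : Function.Injective f :=
    (add_right_injective α).comp ((smul_left_injective ℝ hδ).comp Nat.cast_injective)
  exact Set.not_infinite.mpr D.roots.finite_toSet (Set.infinite_of_injective_forall_mem inj mem)

lemma sub_mem_roots_of_pairing_pos_s2 {α β : Module.Dual ℝ V} (hα : α ∈ D.roots)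
    (hβ : β ∈ D.roots) (hne : β ≠ α) (h : 0 < β (D.coroot α)) : β - α ∈ D.roots := by
  obtain ⟨n, hn⟩ := D.crystallographic α hα β hβ
  obtain ⟨m, hm⟩ := D.crystallographic β hβ α hα
  have hn0 : 0 < n := by exact_mod_cast hn ▸ h
  have hm0 : 0 < m := by exact_mod_cast hm ▸ D.pairing_pos_of_pairing_pos hα hβ h
  have hnm : n * m ≤ 4 := by exact_mod_cast hn ▸ hm ▸ D.pairing_mul_pairing_le_four hα hβ
  by_cases hn1 : n = 1
  · simpa [hn, hn1] using D.reflection_mem α hα β hβ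
  by_cases hm1 : m = 1
  · simpa [hm, hm1] using D.neg_mem_roots_s2 (D.reflection_mem β hβ α hα)
  have hn2 : n = 2 := by nlinarith [show 2 ≤ n by omega, show 2 ≤ m by omega]
  have hm2 : m = 2 := by subst hn2; omega
  exact absurd (D.eq_of_pairing_eq_two hα hβ (by simp [hn, hn2]) (by simp [hm, hm2])).symm hne

section

variable {D}

lemma IsSimpleRoot.sub_mem_pos {σ β : Module.Dual ℝ V} (hσ : D.IsSimpleRoot σ)
    (hβ : β ∈ D.pos) (hne : β ≠ σ) (h : 0 < β (D.coroot σ)) : β - σ ∈ D.pos := by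
  have hroot := D.sub_mem_roots_of_pairing_pos_s2 (D.pos_subset hσ.1) (D.pos_subset hβ) hne h
  refine (D.pos_or_neg _ hroot).resolve_right fun hneg => hσ.2 ⟨β, hβ, σ - β, ?_, by abel⟩
  rwa [neg_sub] at hneg

lemma IsSimpleRoot.sub_smul_mem_pos {σ β : Module.Dual ℝ V} (hσ : D.IsSimpleRoot σ)
    (hβ : β ∈ D.pos) (hne : β ≠ σ) {j : ℕ} (hj : 2 * (j : ℝ) < β (D.coroot σ) + 2) :
    β - (j : ℝ) • σ ∈ D.pos := by
  induction j with
  | zero => simpa using hβ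
  | succ j ih =>
    push_cast at hj
    have hσr := D.pos_subset hσ.1
    have hne' : β - (j : ℝ) • σ ≠ σ := by
      intro heq
      have hβeq : β = ((j : ℝ) + 1) • σ := by linear_combination (norm := module) heq
      rcases D.reduced σ hσr _ (hβeq ▸ D.pos_subset hβ) with h | h
      · exact hne (by rw [hβeq, h, one_smul])
      · linarith [(j.cast_nonneg : (0 : ℝ) ≤ j)]
    have hpair : 0 < (β - (j : ℝ) • σ) (D.coroot σ) := by
      simp only [LinearMap.sub_apply, LinearMap.smul_apply, smul_eq_mul, D.coroot_self σ hσr]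
      linarith
    convert hσ.sub_mem_pos (ih (by linarith)) hne' hpair using 1
    push_cast
    module

lemma IsSimpleRoot.mul_pairing_le {σ : Module.Dual ℝ V} (hσ : D.IsSimpleRoot σ) {μ : V}
    (hμ : D.IsDominant μ) {k : ℕ} (hk : 2 * (k : ℝ) ≤ σ μ) {β : Module.Dual ℝ V}
    (hβ : β ∈ D.pos) : (k : ℝ) * β (D.coroot σ) ≤ β μ := by
  by_cases hβσ : β = σ
  · subst hβσ
    rw [D.coroot_self β (D.pos_subset hβ)]
    linarith
  have hk0 : (0 : ℝ) ≤ k := k.cast_nonneg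
  set n := β (D.coroot σ)
  rcases le_or_gt n 0 with hn | hn
  · nlinarith [hμ β hβ]
  set j := ⌈n / 2⌉₊
  have hjn : n ≤ 2 * j := by linarith [Nat.le_ceil (n / 2)]
  have hj : 2 * (j : ℝ) < n + 2 := by
    linarith [Nat.ceil_lt_add_one (div_nonneg hn.le zero_le_two)]
  have hpos := hμ _ (hσ.sub_smul_mem_pos hβ hβσ hj)
  simp only [LinearMap.sub_apply, LinearMap.smul_apply, smul_eq_mul] at hpos
  have hj0 : (0 : ℝ) ≤ j := j.cast_nonneg
  nlinarith [mul_le_mul_of_nonneg_left hk hj0, mul_le_mul_of_nonneg_left hjn hk0]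

end

/-- The coroot of `v α` is `v α̌`, as far as roots can tell: both have the same length and the
same pairing with `v α` for the invariant form. -/
lemma apply_coroot_dualAct_s2 {v : V ≃ₗ[ℝ] V} (hv : v ∈ D.weylGroup) {α : Module.Dual ℝ V}
    (hα : α ∈ D.roots) (hvα : dualAct v α ∈ D.roots) {β : Module.Dual ℝ V}
    (hβ : β ∈ D.roots) : β (D.coroot (dualAct v α)) = β (v (D.coroot α)) := by
  set x := v (D.coroot α)
  set y := D.coroot (dualAct v α)
  have hsymm : D.invForm y x = D.invForm x y := D.invForm_isSymm.eq _ _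
  have hyy : D.invForm y y = D.invForm x y := by
    have h := D.apply_mul_invForm_coroot hvα x
    rw [show dualAct v α x = 2 by simp [x, dualAct, D.coroot_self α hα]] at h
    linarith
  have hxx : D.invForm x x = D.invForm x y := by
    have h := D.apply_mul_invForm_coroot hα (v.symm y)
    rw [show α (v.symm y) = 2 from D.coroot_self _ hvα, ← D.invForm_weyl hv (v.symm y),
      LinearEquiv.apply_symm_apply] at h
    have hweyl : D.invForm x x = D.invForm (D.coroot α) (D.coroot α) := D.invForm_weyl hv _ _
    linarith
  have hz : D.invForm (x - y) (x - y) = 0 := by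
    simp only [map_sub, LinearMap.sub_apply]
    linarith
  have := D.apply_eq_zero_of_invForm_self_eq_zero hz hβ
  rw [map_sub] at this
  linarith

end RootSystemData

theorem dominant_of_simple_image_general (D : RootSystemData V) (ν : V)
    (α : Module.Dual ℝ V) (hα : α ∈ D.pos) (v : V ≃ₗ[ℝ] V) (hv : v ∈ D.weylGroup)
    (hvν : D.IsDominant (v ν)) (hvα : D.IsSimpleRoot (dualAct v α))
    (k : ℕ) (hk : 0 ≤ α ν - 2 * (k : ℝ)) :
    D.IsDominant (v (ν - (k : ℝ) • D.coroot α)) := by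
  intro β hβ
  have hσν : dualAct v α (v ν) = α ν := by simp [dualAct]
  have hcoroot := D.apply_coroot_dualAct_s2 hv (D.pos_subset hα) (D.pos_subset hvα.1)
    (D.pos_subset hβ)
  have hbound := hvα.mul_pairing_le hvν (by linarith) hβ
  rw [map_sub, map_smul, map_sub, map_smul, smul_eq_mul, ← hcoroot]
  linarith

/-- If `ν` is dominant, `α ∈ Σ⁺`, `v ∈ W` satisfies that `v(ν)` is
dominant and `v(α)` is simple, and `k ≥ 0` is an integer with `⟨ν,α⟩ − 2k ≥ 0`, then
`v(ν − k·α̌)` is dominant. -/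
theorem dominant_of_simple_image (D : RootSystemData V) (ν : V) (hν : D.IsDominant ν)
    (α : Module.Dual ℝ V) (hα : α ∈ D.pos) (v : V ≃ₗ[ℝ] V) (hv : v ∈ D.weylGroup)
    (hvν : D.IsDominant (v ν)) (hvα : D.IsSimpleRoot (dualAct v α))
    (k : ℕ) (hk : 0 ≤ α ν - 2 * (k : ℝ)) :
    D.IsDominant (v (ν - (k : ℝ) • D.coroot α)) :=
  dominant_of_simple_image_general D ν α hα v hv hvν hvα k hk
end

section
/- Let Σ, W, Λ, ν and the Iwahori–Matsumoto length ℓ on W ⋉ Λ be as above, with Σ_M determined by Δ_M ⊆ Δ, and define ℓ_M by the same formula using Σ_M⁺ in place of Σ⁺. If two elements x, y of W_M ⋉ Λ are both M-negative (i.e. x^{-1} maps every pair (α,0) with α ∈ Σ⁺\Σ_M⁺ to a positive affine root, equivalently for x = λw with w ∈ W_M: ⟨ν(λ),α⟩ ≥ 0 for all α ∈ Σ⁺\Σ_M⁺), then ℓ(x) + ℓ(y) − ℓ(xy) = ℓ_M(x) + ℓ_M(y) − ℓ_M(xy). -/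
open Module

variable {V : Type} [AddCommGroup V] [Module ℝ V]

open scoped Classical in
/-- The Iwahori–Matsumoto length of the element `λ w` of the extended affine Weyl
group, where `x = ν(λ)`:
`ℓ(λw) = Σ_{α∈Σ⁺, w⁻¹α>0} |⟨ν(λ),α⟩| + Σ_{α∈Σ⁺, w⁻¹α<0} |⟨ν(λ),α⟩ − 1|`. -/
noncomputable def RootSystemData.imLen (D : RootSystemData V) (x : V) (w : V ≃ₗ[ℝ] V) : ℝ :=
  (∑ α ∈ D.pos.filter (fun α => dualAct w⁻¹ α ∈ D.pos), |α x|) +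
  (∑ α ∈ D.pos.filter (fun α => dualAct w⁻¹ α ∉ D.pos), |α x - 1|)

open scoped Classical in
/-- The Iwahori–Matsumoto length computed with respect to the positive system
`Σ_M⁺ = Σ⁺ ∩ ℤΘ` of a Levi subsystem. -/
noncomputable def RootSystemData.imLenM (D : RootSystemData V) (Θ : Set (Module.Dual ℝ V))
    (x : V) (w : V ≃ₗ[ℝ] V) : ℝ :=
  (∑ α ∈ D.pos.filter
      (fun α => α ∈ AddSubgroup.closure Θ ∧ dualAct w⁻¹ α ∈ D.pos), |α x|) +
  (∑ α ∈ D.pos.filter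
      (fun α => α ∈ AddSubgroup.closure Θ ∧ dualAct w⁻¹ α ∉ D.pos), |α x - 1|)
namespace StmtAux

open Module

variable {V : Type} [AddCommGroup V] [Module ℝ V]

lemma dualAct_apply (w : V ≃ₗ[ℝ] V) (β : Module.Dual ℝ V) (v : V) :
    dualAct w β v = β (w.symm v) := rfl

lemma dualAct_one (β : Module.Dual ℝ V) : dualAct (1 : V ≃ₗ[ℝ] V) β = β := rfl

lemma dualAct_mul (u w : V ≃ₗ[ℝ] V) (β : Module.Dual ℝ V) :
    dualAct (u * w) β = dualAct u (dualAct w β) := rfl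

lemma dualAct_inv_apply (w : V ≃ₗ[ℝ] V) (β : Module.Dual ℝ V) (v : V) :
    dualAct w⁻¹ β v = β (w v) := rfl

variable (D : RootSystemData V)

lemma sRef_mul_self {α : Module.Dual ℝ V} (h : α ∈ D.roots) :
    D.sRef α h * D.sRef α h = 1 := by
  ext v
  have h2 := D.coroot_self α h
  show D.sRef α h (D.sRef α h v) = v
  show (D.sRef α h v) - α (D.sRef α h v) • D.coroot α = v
  show (v - α v • D.coroot α) - α (v - α v • D.coroot α) • D.coroot α = v
  simp only [map_sub, map_smul, smul_eq_mul, h2]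
  have : α v - α v * 2 = -(α v) := by ring
  rw [this, neg_smul, sub_neg_eq_add, sub_add_cancel]

lemma dualAct_sRef {α : Module.Dual ℝ V} (h : α ∈ D.roots) (δ : Module.Dual ℝ V) :
    dualAct (D.sRef α h) δ = δ - δ (D.coroot α) • α := by
  ext v
  show δ ((D.sRef α h).symm v) = _
  show δ (v - α v • D.coroot α) = δ v - δ (D.coroot α) * α v
  simp only [map_sub, map_smul, smul_eq_mul]
  ring

lemma roots_dualAct_sRef {α : Module.Dual ℝ V} (h : α ∈ D.roots)
    {δ : Module.Dual ℝ V} (hδ : δ ∈ D.roots) :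
    dualAct (D.sRef α h) δ ∈ D.roots := by
  rw [dualAct_sRef]
  exact D.reflection_mem α h δ hδ

lemma neg_root_mem {β : Module.Dual ℝ V} (h : β ∈ D.roots) : -β ∈ D.roots := by
  have := D.reflection_mem β h β h
  rw [D.coroot_self β h] at this
  have e : β - (2:ℝ) • β = -β := by module
  rwa [e] at this

end StmtAux
namespace StmtAux

/-- Chebyshev-like sequence for trace `t`, det 1. -/
def useq (t : ℤ) : ℕ → ℤ
  | 0 => 0
  | 1 => 1
  | (k+2) => t * useq t (k+1) - useq t k

lemma useq_abs_lt (t : ℤ) (ht : 2 ≤ |t|) : ∀ k : ℕ, |useq t k| < |useq t (k+1)| := by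
  intro k
  induction k using Nat.strong_induction_on with
  | _ k ih =>
    match k with
    | 0 => simp [useq]
    | 1 =>
      have : useq t 2 = t * 1 - 0 := rfl
      rw [this]
      simpa [useq] using by omega
    | (k+2) =>
      have h1 := ih (k+1) (by omega)
      have h0 := ih k (by omega)
      have e : useq t (k+3) = t * useq t (k+2) - useq t (k+1) := rfl
      rw [e]
      have habs : |t * useq t (k+2)| = |t| * |useq t (k+2)| := abs_mul _ _
      have h3 : |t * useq t (k+2) - useq t (k+1)| ≥ |t * useq t (k+2)| - |useq t (k+1)| :=
        abs_sub_abs_le_abs_sub _ _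
      nlinarith [abs_nonneg (useq t (k+2)), abs_nonneg (useq t (k+1))]

lemma useq_ne_zero (t : ℤ) (ht : 2 ≤ |t|) (m : ℕ) (hm : 1 ≤ m) : useq t m ≠ 0 := by
  have : ∀ k : ℕ, 1 ≤ |useq t (k+1)| := by
    intro k
    induction k with
    | zero => simp [useq]
    | succ k ih => have := useq_abs_lt t ht (k+1); omega
  obtain ⟨k, rfl⟩ : ∃ k, m = k + 1 := ⟨m - 1, by omega⟩
  have := this k
  intro h; rw [h] at this; simp at this

/-- The matrix action on coordinates: image of `(a,b)` under `s_α s_β` in basis `(α, β)`. -/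
def Tmap (n q : ℤ) : ℤ × ℤ → ℤ × ℤ :=
  fun p => (p.1 * (n * q - 1) + p.2 * q, -(p.1 * n) - p.2)

lemma Tmap_iterate (n q : ℤ) : ∀ (k : ℕ) (p : ℤ × ℤ),
    Tmap n q ((Tmap n q)^[k] p)
      = useq (n*q-2) (k+1) • Tmap n q p - useq (n*q-2) k • p := by
  intro k
  induction k with
  | zero => intro p; simp [useq]
  | succ k ih =>
    intro p
    rw [Function.iterate_succ_apply', ih p]
    have e : useq (n*q-2) (k+2) = (n*q-2) * useq (n*q-2) (k+1) - useq (n*q-2) k := rfl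
    rw [e]
    obtain ⟨a, b⟩ := p
    simp only [Tmap, Prod.smul_mk, smul_eq_mul, Prod.mk_sub_mk, Prod.mk.injEq]
    constructor <;> ring

lemma key_int (n q : ℤ) (hn : 2 ≤ |n|) (m : ℕ) (hm : 1 ≤ m)
    (h1 : (Tmap n q)^[m] (1, 0) = (1, 0)) :
    (n = 2 ∧ q = 1) ∨ (n = 3 ∧ q = 1) ∨ (n = -2 ∧ q = -1) ∨ (n = -3 ∧ q = -1) := by
  obtain ⟨k, rfl⟩ : ∃ k, m = k + 1 := ⟨m - 1, by omega⟩
  have h2 : Tmap n q ((Tmap n q)^[k] (1,0))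
      = useq (n*q-2) (k+1) • Tmap n q (1,0) - useq (n*q-2) k • (1,0) :=
    Tmap_iterate n q k _
  rw [← Function.iterate_succ_apply' (Tmap n q) k (1,0), h1] at h2
  have hT : Tmap n q (1, 0) = (n*q - 1, -n) := by simp [Tmap]
  rw [hT] at h2
  have hn' : 2 ≤ n ∨ n ≤ -2 := by rcases abs_cases n with ⟨h,_⟩|⟨h,_⟩ <;> omega
  have hn0 : n ≠ 0 := by omega
  simp only [Prod.smul_mk, smul_eq_mul, Prod.mk_sub_mk, Prod.mk.injEq] at h2
  obtain ⟨e1, e2⟩ := h2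
  have hu : useq (n*q-2) (k+1) = 0 := by
    rcases mul_eq_zero.mp (show useq (n*q-2) (k+1) * n = 0 by linarith) with h | h
    · exact h
    · exact absurd h hn0
  have ht : |n * q - 2| ≤ 1 := by
    by_contra hc
    push_neg at hc
    exact useq_ne_zero (n*q-2) (by omega) (k+1) (by omega) hu
  have hnq : n*q = 1 ∨ n*q = 2 ∨ n*q = 3 := by
    have := abs_le.mp ht; omega
  have hq0 : q ≠ 0 := by rintro rfl; simp at hnq
  have hq1 : 1 ≤ |q| := Int.one_le_abs (by exact_mod_cast hq0)
  have h5 : |n*q| ≤ 3 := by rcases hnq with h|h|h <;> rw [h] <;> norm_num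
  have h6 : |n| ≤ |n| * |q| := le_mul_of_one_le_right (abs_nonneg n) hq1
  have hnb : |n| ≤ 3 := by rw [abs_mul] at h5; linarith
  obtain ⟨hl, hr⟩ := abs_le.mp hnb
  interval_cases n <;> omega

end StmtAux
namespace StmtAux

open Module

variable {V : Type} [AddCommGroup V] [Module ℝ V] (D : RootSystemData V)

lemma key_pos (ΔM : Set (Module.Dual ℝ V)) (hΔM : ∀ α ∈ ΔM, D.IsSimpleRoot α)
    {β : Module.Dual ℝ V} (hβr : β ∈ D.roots) (hβΔ : β ∈ ΔM)
    {α : Module.Dual ℝ V} (hα : α ∈ D.pos) (hαcl : α ∉ AddSubgroup.closure ΔM) :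
    dualAct (D.sRef β hβr) α ∈ D.pos := by
  classical
  have hβs := hΔM β hβΔ
  have hβp : β ∈ D.pos := hβs.1
  have hαr : α ∈ D.roots := D.pos_subset hα
  obtain ⟨n, hn⟩ := D.crystallographic β hβr α hαr
  rw [dualAct_sRef D hβr α, hn]
  by_contra hcon
  have hroot : α - ((n : ℝ)) • β ∈ D.roots := by
    have := D.reflection_mem β hβr α hαr
    rwa [hn] at this
  rcases D.pos_or_neg _ hroot with h | hγ
  · exact hcon h
  rw [neg_sub] at hγ
  -- hγ : (n:ℝ) • β - α ∈ D.pos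
  have negroot : -β ∈ D.roots := neg_root_mem D hβr
  have hdec : ∀ x ∈ D.pos, ∀ y ∈ D.pos, x + y ≠ β := by
    intro x hx y hy h
    exact hβs.2 ⟨x, hx, y, hy, h.symm⟩
  have hdecneg : ∀ x ∈ D.pos, ∀ y ∈ D.pos, x + y ≠ -β := by
    intro x hx y hy h
    have h2 : x + y ∈ D.pos := D.pos_add x hx y hy (by rw [h]; exact negroot)
    rw [h] at h2
    exact D.pos_not_neg β hβp h2
  -- linear independence of α and β
  have hβcl : β ∈ AddSubgroup.closure ΔM := AddSubgroup.subset_closure hβΔ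
  have hind : ∀ c d : ℝ, c • α + d • β = 0 → c = 0 ∧ d = 0 := by
    intro c d h
    by_cases hc : c = 0
    · subst hc
      rw [zero_smul, zero_add] at h
      rcases smul_eq_zero.mp h with h | h
      · exact ⟨rfl, h⟩
      · exact absurd h (D.root_ne_zero β hβr)
    · exfalso
      have hαeq : α = (-d / c) • β := by
        have h1 : c • α = (-d) • β :=
          (eq_neg_of_add_eq_zero_left h).trans (neg_smul d β).symm
        have h2 := congrArg (fun x => c⁻¹ • x) h1
        simp only [smul_smul, inv_mul_cancel₀ hc, one_smul] at h2
        rw [div_eq_inv_mul]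
        exact h2
      have := D.reduced β hβr (-d / c) (by rw [← hαeq]; exact hαr)
      rcases this with h1 | h1
      · rw [h1, one_smul] at hαeq
        exact hαcl (hαeq ▸ hβcl)
      · rw [h1] at hαeq
        have : α = -β := by rw [hαeq]; module
        exact hαcl (this ▸ (AddSubgroup.neg_mem _ hβcl))
  rcases (show n = 0 ∨ n = 1 ∨ n = -1 ∨ 2 ≤ n ∨ n ≤ -2 by omega) with rfl | rfl | rfl | hn2
  · -- n = 0 : γ = -α
    have : -α ∈ D.pos := by
      have e : ((0:ℤ):ℝ) • β - α = -α := by push_cast; module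
      rwa [e] at hγ
    exact D.pos_not_neg α hα this
  · -- n = 1 : β = α + (β - α)
    have hγ1 : β - α ∈ D.pos := by
      have e : ((1:ℤ):ℝ) • β - α = β - α := by push_cast; module
      rwa [e] at hγ
    exact hdec α hα (β - α) hγ1 (by abel)
  · -- n = -1 : γ = -(α + β)
    have hγ1 : -(α + β) ∈ D.pos := by
      have e : ((-1:ℤ):ℝ) • β - α = -(α + β) := by push_cast; module
      rwa [e] at hγ
    exact hdecneg _ hγ1 α hα (by abel)
  -- |n| ≥ 2 : the rank-two finiteness argument
  obtain ⟨q, hq⟩ := D.crystallographic α hαr β hβr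
  set F : Module.Dual ℝ V → Module.Dual ℝ V :=
    fun δ => dualAct (D.sRef α hαr) (dualAct (D.sRef β hβr) δ) with hF
  have hGF : ∀ δ, dualAct (D.sRef β hβr) (dualAct (D.sRef α hαr) (F δ)) = δ := by
    intro δ
    show dualAct (D.sRef β hβr) (dualAct (D.sRef α hαr)
      (dualAct (D.sRef α hαr) (dualAct (D.sRef β hβr) δ))) = δ
    rw [← dualAct_mul (D.sRef α hαr) (D.sRef α hαr), sRef_mul_self, dualAct_one,
      ← dualAct_mul (D.sRef β hβr) (D.sRef β hβr), sRef_mul_self, dualAct_one]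
  have hGF' : Function.LeftInverse
      (fun δ => dualAct (D.sRef β hβr) (dualAct (D.sRef α hαr) δ)) F := hGF
  have hFroots : ∀ δ ∈ D.roots, F δ ∈ D.roots := fun δ h =>
    roots_dualAct_sRef D hαr (roots_dualAct_sRef D hβr h)
  have horb : ∀ δ ∈ D.roots, ∃ m : ℕ, 1 ≤ m ∧ F^[m] δ = δ := by
    intro δ hδ
    have hiter : ∀ k : ℕ, F^[k] δ ∈ D.roots := by
      intro k; induction k with
      | zero => simpa using hδ
      | succ k ih => rw [Function.iterate_succ_apply']; exact hFroots _ ih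
    have hfin : Finite {x // x ∈ (D.roots : Set (Module.Dual ℝ V))} :=
      (D.roots.finite_toSet).to_subtype
    obtain ⟨k, l, hkl, he⟩ := Finite.exists_ne_map_eq_of_infinite
      (fun k : ℕ => (⟨F^[k] δ, hiter k⟩ : {x // x ∈ (D.roots : Set (Module.Dual ℝ V))}))
    rw [Subtype.mk.injEq] at he
    have main : ∀ k l : ℕ, k < l → F^[k] δ = F^[l] δ → ∃ m, 1 ≤ m ∧ F^[m] δ = δ := by
      intro k l hkl he
      refine ⟨l - k, by omega, ?_⟩
      have h2 : F^[k] (F^[l - k] δ) = F^[k] δ := by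
        rw [← Function.iterate_add_apply]
        have hkk : k + (l - k) = l := by omega
        rw [hkk, ← he]
      exact (hGF'.iterate k).injective h2
    rcases lt_or_gt_of_ne hkl with h | h
    · exact main k l h he
    · exact main l k h he.symm
  obtain ⟨m₁, hm₁, hfixα⟩ := horb α hαr
  obtain ⟨m₂, hm₂, hfixβ⟩ := horb β hβr
  set m := m₁ * m₂ with hm
  have hmone : 1 ≤ m := Nat.one_le_iff_ne_zero.mpr (by positivity)
  have hmα : F^[m] α = α := by
    rw [hm, Function.iterate_mul]
    exact Function.iterate_fixed hfixα m₂
  have hmβ : F^[m] β = β := by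
    rw [hm, Nat.mul_comm, Function.iterate_mul]
    exact Function.iterate_fixed hfixβ m₁
  set ι : ℤ × ℤ → Module.Dual ℝ V := fun p => (p.1 : ℝ) • α + (p.2 : ℝ) • β with hι
  have hFstep : ∀ p : ℤ × ℤ, F (ι p) = ι (Tmap n q p) := by
    rintro ⟨a, b⟩
    show dualAct (D.sRef α hαr) (dualAct (D.sRef β hβr) ((a:ℝ) • α + (b:ℝ) • β)) = _
    rw [dualAct_sRef D hβr ((a:ℝ) • α + (b:ℝ) • β)]
    have e1 : ((a:ℝ) • α + (b:ℝ) • β) (D.coroot β) = (a:ℝ) * n + (b:ℝ) * 2 := by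
      simp [hn, D.coroot_self β hβr]
      try ring
    rw [e1, dualAct_sRef D hαr]
    have e2 : (((a:ℝ) • α + (b:ℝ) • β) - ((a:ℝ) * n + (b:ℝ) * 2) • β) (D.coroot α)
        = (a:ℝ) * 2 + (b:ℝ) * q - ((a:ℝ) * n + (b:ℝ) * 2) * q := by
      simp [hq, D.coroot_self α hαr]
      try ring
    rw [e2]
    show _ = ((a * (n * q - 1) + b * q : ℤ) : ℝ) • α + ((-(a * n) - b : ℤ) : ℝ) • β
    push_cast
    module
  have hFiter : ∀ (k : ℕ) (p : ℤ × ℤ), F^[k] (ι p) = ι ((Tmap n q)^[k] p) := by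
    intro k
    induction k with
    | zero => intro p; simp
    | succ k ih =>
      intro p
      rw [Function.iterate_succ_apply', ih p, hFstep, ← Function.iterate_succ_apply' (Tmap n q) k p]
  have hιinj : ∀ p p' : ℤ × ℤ, ι p = ι p' → p = p' := by
    intro p p' h
    have h0 : ((p.1 - p'.1 : ℤ) : ℝ) • α + ((p.2 - p'.2 : ℤ) : ℝ) • β = 0 := by
      push_cast
      rw [hι] at h
      simp only [] at h
      have := sub_eq_zero.mpr h
      rw [← this]
      module
    obtain ⟨c1, c2⟩ := hind _ _ h0
    have : p.1 = p'.1 := by exact_mod_cast sub_eq_zero.mp (by exact_mod_cast c1)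
    have : p.2 = p'.2 := by exact_mod_cast sub_eq_zero.mp (by exact_mod_cast c2)
    exact Prod.ext (by omega) (by omega)
  have hι10 : ι (1, 0) = α := by simp [hι]
  have hT1 : (Tmap n q)^[m] (1, 0) = (1, 0) := by
    apply hιinj
    rw [← hFiter, hι10, hmα]
  have habs : 2 ≤ |n| := by rcases abs_cases n with ⟨h, _⟩ | ⟨h, _⟩ <;> omega
  rcases key_int n q habs m hmone hT1 with ⟨rfl, rfl⟩ | ⟨rfl, rfl⟩ | ⟨rfl, rfl⟩ | ⟨rfl, rfl⟩
  · -- n = 2, q = 1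
    push_cast at hn hq hγ
    have hδroot : β - α ∈ D.roots := by
      have := D.reflection_mem α hαr β hβr
      rwa [hq, one_smul] at this
    rcases D.pos_or_neg _ hδroot with h | h
    · exact hdec α hα (β - α) h (by abel)
    · rw [neg_sub] at h
      exact hdec _ hγ _ h (by module)
  · -- n = 3, q = 1
    push_cast at hn hq hγ
    have hδroot : β - α ∈ D.roots := by
      have := D.reflection_mem α hαr β hβr
      rwa [hq, one_smul] at this
    rcases D.pos_or_neg _ hδroot with h | h
    · exact hdec α hα (β - α) h (by abel)
    · rw [neg_sub] at h
      -- α - β ∈ pos ; reflect in β again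
      have hpair : (α - β) (D.coroot β) = 1 := by
        simp [hn, D.coroot_self β hβr]; ring
      have hδ2root : (α - β) - β ∈ D.roots := by
        have := D.reflection_mem β hβr (α - β) (D.pos_subset h)
        rwa [hpair, one_smul] at this
      rcases D.pos_or_neg _ hδ2root with h2 | h2
      · exact hdec _ hγ _ h2 (by module)
      · exact hdec _ h2 _ h (by module)
  · -- n = -2, q = -1
    push_cast at hn hq hγ
    have hδroot : β + α ∈ D.roots := by
      have := D.reflection_mem α hαr β hβr
      have e : β - (-1 : ℝ) • α = β + α := by module
      rwa [hq, e] at this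
    rcases D.pos_or_neg _ hδroot with h | h
    · exact hdecneg _ hγ _ h (by module)
    · exact hdecneg _ h _ hα (by module)
  · -- n = -3, q = -1
    push_cast at hn hq hγ
    have hδroot : β + α ∈ D.roots := by
      have := D.reflection_mem α hαr β hβr
      have e : β - (-1 : ℝ) • α = β + α := by module
      rwa [hq, e] at this
    rcases D.pos_or_neg _ hδroot with h | h
    · have hpair : (β + α) (D.coroot β) = -1 := by
        simp [hn, D.coroot_self β hβr]; ring
      have hδ2root : (β + α) - (-1 : ℝ) • β ∈ D.roots := by
        have := D.reflection_mem β hβr (β + α) (D.pos_subset h)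
        rwa [hpair] at this
      rcases D.pos_or_neg _ hδ2root with h2 | h2
      · exact hdecneg _ hγ _ h2 (by module)
      · exact hdecneg _ h2 _ h (by module)
    · exact hdecneg _ h _ hα (by module)

end StmtAux
namespace StmtAux

open Module

variable {V : Type} [AddCommGroup V] [Module ℝ V] (D : RootSystemData V)

lemma key_cl (ΔM : Set (Module.Dual ℝ V))
    {β : Module.Dual ℝ V} (hβr : β ∈ D.roots) (hβΔ : β ∈ ΔM)
    {α : Module.Dual ℝ V} (hαr : α ∈ D.roots) (hαcl : α ∉ AddSubgroup.closure ΔM) :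
    dualAct (D.sRef β hβr) α ∉ AddSubgroup.closure ΔM := by
  intro hmem
  obtain ⟨n, hn⟩ := D.crystallographic β hβr α hαr
  rw [dualAct_sRef D hβr α, hn] at hmem
  have hβcl : β ∈ AddSubgroup.closure ΔM := AddSubgroup.subset_closure hβΔ
  have h2 : (n:ℝ) • β ∈ AddSubgroup.closure ΔM := by
    have e : (n : ℝ) • β = n • β := Int.cast_smul_eq_zsmul ℝ n β
    rw [e]
    exact AddSubgroup.zsmul_mem _ hβcl n
  have h3 := AddSubgroup.add_mem _ hmem h2
  rw [sub_add_cancel] at h3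
  exact hαcl h3

lemma parab_pres (ΔM : Set (Module.Dual ℝ V)) (hΔM : ∀ α ∈ ΔM, D.IsSimpleRoot α)
    {w : V ≃ₗ[ℝ] V} (hw : w ∈ D.parabolic ΔM) :
    ∀ α, α ∈ D.pos → α ∉ AddSubgroup.closure ΔM →
      dualAct w α ∈ D.pos ∧ dualAct w α ∉ AddSubgroup.closure ΔM := by
  have main : ∀ w, w ∈ D.parabolic ΔM →
      ((∀ α, α ∈ D.pos → α ∉ AddSubgroup.closure ΔM →
        dualAct w α ∈ D.pos ∧ dualAct w α ∉ AddSubgroup.closure ΔM) ∧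
       (∀ α, α ∈ D.pos → α ∉ AddSubgroup.closure ΔM →
        dualAct w⁻¹ α ∈ D.pos ∧ dualAct w⁻¹ α ∉ AddSubgroup.closure ΔM)) := by
    intro w hw
    rw [RootSystemData.parabolic] at hw
    refine Subgroup.closure_induction ?_ ?_ ?_ ?_ hw
    · rintro x ⟨δ, hδr, hδΔ, rfl⟩
      have inv_eq : (D.sRef δ hδr)⁻¹ = D.sRef δ hδr :=
        inv_eq_of_mul_eq_one_left (sRef_mul_self D hδr)
      have base : ∀ α, α ∈ D.pos → α ∉ AddSubgroup.closure ΔM →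
          dualAct (D.sRef δ hδr) α ∈ D.pos ∧
          dualAct (D.sRef δ hδr) α ∉ AddSubgroup.closure ΔM := by
        intro α hα hαcl
        exact ⟨key_pos D ΔM hΔM hδr hδΔ hα hαcl,
          key_cl D ΔM hδr hδΔ (D.pos_subset hα) hαcl⟩
      exact ⟨base, by rw [inv_eq]; exact base⟩
    · constructor <;> intro α hα hcl
      · rw [dualAct_one]; exact ⟨hα, hcl⟩
      · rw [inv_one, dualAct_one]; exact ⟨hα, hcl⟩
    · intro x y hx hy px py
      constructor
      · intro α hα hcl
        rw [dualAct_mul]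
        obtain ⟨h1, h2⟩ := py.1 α hα hcl
        exact px.1 _ h1 h2
      · intro α hα hcl
        rw [mul_inv_rev, dualAct_mul]
        obtain ⟨h1, h2⟩ := px.2 α hα hcl
        exact py.2 _ h1 h2
    · intro x hx px
      refine ⟨px.2, ?_⟩
      rw [inv_inv]
      exact px.1
  exact (main w hw).1

open scoped Classical in
lemma decomp (ΔM : Set (Module.Dual ℝ V)) (hΔM : ∀ α ∈ ΔM, D.IsSimpleRoot α)
    {w : V ≃ₗ[ℝ] V} (hw : w ∈ D.parabolic ΔM) (x : V) :
    D.imLen x w = D.imLenM ΔM x w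
      + ∑ α ∈ D.pos, (if α ∉ AddSubgroup.closure ΔM then |α x| else 0) := by
  classical
  have hpos : ∀ α ∈ D.pos, α ∉ AddSubgroup.closure ΔM → dualAct w⁻¹ α ∈ D.pos :=
    fun α h1 h2 => (parab_pres D ΔM hΔM (inv_mem hw) α h1 h2).1
  rw [RootSystemData.imLen, RootSystemData.imLenM]
  rw [Finset.sum_filter, Finset.sum_filter, Finset.sum_filter, Finset.sum_filter]
  rw [← Finset.sum_add_distrib, ← Finset.sum_add_distrib, ← Finset.sum_add_distrib]
  apply Finset.sum_congr rfl
  intro α hα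
  by_cases hcl : α ∈ AddSubgroup.closure ΔM
  · by_cases hc : dualAct w⁻¹ α ∈ D.pos <;> simp [hcl, hc]
  · have hc := hpos α hα hcl
    simp [hcl, hc]

open scoped Classical in
lemma reindex (ΔM : Set (Module.Dual ℝ V)) (hΔM : ∀ α ∈ ΔM, D.IsSimpleRoot α)
    {w : V ≃ₗ[ℝ] V} (hw : w ∈ D.parabolic ΔM) (x : V) :
    ∑ α ∈ D.pos, (if α ∉ AddSubgroup.closure ΔM then (dualAct w α) x else 0)
      = ∑ α ∈ D.pos, (if α ∉ AddSubgroup.closure ΔM then α x else 0) := by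
  classical
  rw [← Finset.sum_filter, ← Finset.sum_filter]
  refine Finset.sum_nbij' (fun α => dualAct w α) (fun α => dualAct w⁻¹ α) ?_ ?_ ?_ ?_ ?_
  · intro a ha
    rw [Finset.mem_filter] at ha ⊢
    exact ⟨(parab_pres D ΔM hΔM hw a ha.1 ha.2).1, (parab_pres D ΔM hΔM hw a ha.1 ha.2).2⟩
  · intro a ha
    rw [Finset.mem_filter] at ha ⊢
    exact ⟨(parab_pres D ΔM hΔM (inv_mem hw) a ha.1 ha.2).1,
      (parab_pres D ΔM hΔM (inv_mem hw) a ha.1 ha.2).2⟩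
  · intro a _
    show dualAct w⁻¹ (dualAct w a) = a
    rw [← dualAct_mul, inv_mul_cancel, dualAct_one]
  · intro a _
    show dualAct w (dualAct w⁻¹ a) = a
    rw [← dualAct_mul, mul_inv_cancel, dualAct_one]
  · intro a _
    rfl

end StmtAux

/-- If `x = λ₁w₁` and `y = λ₂w₂` (with `w₁, w₂ ∈ W_M`) are both
`M`-negative, then `ℓ(x) + ℓ(y) − ℓ(xy) = ℓ_M(x) + ℓ_M(y) − ℓ_M(xy)`. -/
theorem imLen_defect_eq_levi_defect (D : RootSystemData V)
    {Λ : Type} [AddCommGroup Λ] (ν : Λ →+ V)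
    (hint : ∀ (μ : Λ), ∀ β ∈ D.roots, ∃ n : ℤ, β (ν μ) = (n : ℝ))
    (ΔM : Set (Module.Dual ℝ V)) (hΔM : ∀ α ∈ ΔM, D.IsSimpleRoot α)
    (lam₁ lam₂ : Λ)
    (hneg₁ : ∀ α ∈ D.pos, α ∉ AddSubgroup.closure ΔM → 0 ≤ α (ν lam₁))
    (hneg₂ : ∀ α ∈ D.pos, α ∉ AddSubgroup.closure ΔM → 0 ≤ α (ν lam₂))
    (w₁ : V ≃ₗ[ℝ] V) (hw₁ : w₁ ∈ D.parabolic ΔM)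
    (w₂ : V ≃ₗ[ℝ] V) (hw₂ : w₂ ∈ D.parabolic ΔM) :
    D.imLen (ν lam₁) w₁ + D.imLen (ν lam₂) w₂ -
        D.imLen (ν lam₁ + w₁ (ν lam₂)) (w₁ * w₂) =
      D.imLenM ΔM (ν lam₁) w₁ + D.imLenM ΔM (ν lam₂) w₂ -
        D.imLenM ΔM (ν lam₁ + w₁ (ν lam₂)) (w₁ * w₂) := by
  classical
  have hw12 : w₁ * w₂ ∈ D.parabolic ΔM := mul_mem hw₁ hw₂
  rw [StmtAux.decomp D ΔM hΔM hw₁ (ν lam₁), StmtAux.decomp D ΔM hΔM hw₂ (ν lam₂),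
    StmtAux.decomp D ΔM hΔM hw12 (ν lam₁ + w₁ (ν lam₂))]
  have key : ∑ α ∈ D.pos,
        (if α ∉ AddSubgroup.closure ΔM then |α (ν lam₁ + w₁ (ν lam₂))| else 0)
      = ∑ α ∈ D.pos, (if α ∉ AddSubgroup.closure ΔM then |α (ν lam₁)| else 0)
      + ∑ α ∈ D.pos, (if α ∉ AddSubgroup.closure ΔM then |α (ν lam₂)| else 0) := by
    have step1 : ∀ α ∈ D.pos,
        (if α ∉ AddSubgroup.closure ΔM then |α (ν lam₁ + w₁ (ν lam₂))| else 0)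
        = (if α ∉ AddSubgroup.closure ΔM then |α (ν lam₁)| else 0)
          + (if α ∉ AddSubgroup.closure ΔM then (dualAct w₁⁻¹ α) (ν lam₂) else 0) := by
      intro α hα
      by_cases hcl : α ∈ AddSubgroup.closure ΔM
      · simp [hcl]
      · rw [if_pos hcl, if_pos hcl, if_pos hcl]
        have h1 : 0 ≤ α (ν lam₁) := hneg₁ α hα hcl
        have hp := StmtAux.parab_pres D ΔM hΔM (inv_mem hw₁) α hα hcl
        have h2 : 0 ≤ (dualAct w₁⁻¹ α) (ν lam₂) := hneg₂ _ hp.1 hp.2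
        have e : α (ν lam₁ + w₁ (ν lam₂)) = α (ν lam₁) + (dualAct w₁⁻¹ α) (ν lam₂) := by
          rw [map_add]; rfl
        rw [e, abs_of_nonneg (add_nonneg h1 h2), abs_of_nonneg h1]
    rw [Finset.sum_congr rfl step1, Finset.sum_add_distrib]
    congr 1
    rw [StmtAux.reindex D ΔM hΔM (inv_mem hw₁) (ν lam₂)]
    apply Finset.sum_congr rfl
    intro α hα
    by_cases hcl : α ∈ AddSubgroup.closure ΔM
    · simp [hcl]
    · rw [if_pos hcl, if_pos hcl, abs_of_nonneg (hneg₂ α hα hcl)]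
  rw [key]
  ring
end

section
/- Let G be a group, C a field (or commutative ring which is an integral domain), f: G → ℝ a group homomorphism, and g ∈ G. Then any element E of the group algebra C[G] of the form E = τ_g + Σ_{h : f(h) < f(g)} c_h τ_h (a finite sum with coefficients c_h ∈ C) is not a left zero divisor: for every nonzero F ∈ C[G], EF ≠ 0. -/
/-!
Choose `k` in the support of `F` with `f k` maximal. Every other way of writing `g * k` as a
product `a * b` of support elements of `τ_g + E'` and of `F` has `f a + f b < f g + f k`, so the
coefficient of `τ_g + E'` times `F` at `g * k` is just `1 * F k ≠ 0`.
-/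

namespace MonoidAlgebra

variable {R G α : Type*} [Semiring R] [Mul G] [IsLeftCancelMul G]
  [AddCommMonoid α] [PartialOrder α] [IsOrderedCancelAddMonoid α]

theorem uniqueMul_of_forall_lt_of_forall_le {A B : Finset G} {f : G → α}
    (hf : ∀ a b, f (a * b) = f a + f b) {g k : G}
    (hA : ∀ a ∈ A, a ≠ g → f a < f g) (hB : ∀ b ∈ B, f b ≤ f k) :
    UniqueMul A B g k := by
  intro a b ha hb hab
  by_cases hag : a = g
  · subst hag
    exact ⟨rfl, mul_left_cancel hab⟩
  · have hlt : f (a * b) < f (g * k) := by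
      rw [hf, hf]
      exact add_lt_add_of_lt_of_le (hA a ha hag) (hB b hb)
    exact absurd (congrArg f hab) hlt.ne

theorem coeff_mul_mul_of_forall_lt_of_forall_le {x y : R[G]} {f : G → α}
    (hf : ∀ a b, f (a * b) = f a + f b) {g k : G}
    (hx : ∀ a ∈ x.coeff.support, a ≠ g → f a < f g) (hy : ∀ b ∈ y.coeff.support, f b ≤ f k) :
    (x * y).coeff (g * k) = x.coeff g * y.coeff k :=
  coeff_mul_mul_of_uniqueMul (uniqueMul_of_forall_lt_of_forall_le hf hx hy)

end MonoidAlgebra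

open MonoidAlgebra in
theorem group_algebra_not_zero_divisor_general {G : Type} [Group G] {C : Type} [CommRing C]
    (f : G → ℝ) (hf : ∀ a b : G, f (a * b) = f a + f b) (g : G)
    (E' : MonoidAlgebra C G) (hE' : ∀ h ∈ E'.coeff.support, f h < f g)
    (F : MonoidAlgebra C G) (hF : F ≠ 0) :
    (MonoidAlgebra.single g (1 : C) + E') * F ≠ 0 := by
  classical
  obtain ⟨k, hk, hmax⟩ := F.coeff.support.exists_max_image f
    (Finsupp.support_nonempty_iff.mpr (coeff_eq_zero.not.mpr hF))
  have hE'g : E'.coeff g = 0 := Finsupp.notMem_support_iff.mp fun hg ↦ (hE' g hg).false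
  have hlower : ∀ a ∈ (single g 1 + E').coeff.support, a ≠ g → f a < f g := by
    intro a ha hag
    rw [coeff_add, coeff_single] at ha
    rcases Finset.mem_union.mp (Finsupp.support_add ha) with ha | ha
    · exact absurd (Finset.mem_singleton.mp (Finsupp.support_single_subset ha)) hag
    · exact hE' a ha
  have hcoeff : ((single g 1 + E') * F).coeff (g * k) = F.coeff k := by
    rw [coeff_mul_mul_of_forall_lt_of_forall_le hf hlower hmax, coeff_add, Finsupp.add_apply,
      coeff_single, Finsupp.single_eq_same, hE'g, add_zero, one_mul]
  intro hzero
  rw [hzero, coeff_zero, Finsupp.coe_zero, Pi.zero_apply] at hcoeff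
  exact Finsupp.mem_support_iff.mp hk hcoeff.symm

/-- Let `G` be a group, `C` an integral domain, `f : G → ℝ` a group
homomorphism and `g ∈ G`. Any element of the group algebra `C[G]` of the form
`τ_g + Σ_{h : f(h) < f(g)} c_h τ_h` is not a left zero divisor. -/
theorem group_algebra_not_zero_divisor {G : Type} [Group G] {C : Type} [CommRing C]
    [IsDomain C] (f : G → ℝ) (hf : ∀ a b : G, f (a * b) = f a + f b) (g : G)
    (E' : MonoidAlgebra C G) (hE' : ∀ h ∈ E'.coeff.support, f h < f g)
    (F : MonoidAlgebra C G) (hF : F ≠ 0) :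
    (MonoidAlgebra.single g (1 : C) + E') * F ≠ 0 :=
  group_algebra_not_zero_divisor_general f hf g E' hE' F hF
end

section
/- Let Λ be a group, V a real vector space with a reduced root system Σ and positive system Σ⁺, ν: Λ → V a group homomorphism, and let 𝒜 = ⊕_{λ∈Λ} C·E(λ) be the C-algebra with multiplication E(λ₁)E(λ₂) = E(λ₁λ₂) if ν(λ₁) and ν(λ₂) lie in a common closed Weyl chamber, and E(λ₁)E(λ₂) = 0 otherwise. Then for any nonzero 𝒜-module X generated by any of its nonzero elements (e.g., any irreducible module), the support supp X = {λ ∈ Λ : X·E(λ) ≠ 0} satisfies: ν(supp X) is contained in a single closed Weyl chamber. -/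
open Module

variable {V : Type} [AddCommGroup V] [Module ℝ V]

/-- `v` and `w` lie in a common closed Weyl chamber: no root hyperplane strictly
separates them. -/
def RootSystemData.SameClosedChamber (D : RootSystemData V) (v w : V) : Prop :=
  ∀ β ∈ D.roots, 0 < β v → 0 ≤ β w

open scoped Classical in
/-- For the algebra `𝒜 = ⊕_{λ∈Λ} C·E(λ)` (with
`E(λ₁)E(λ₂) = E(λ₁λ₂)` if `ν(λ₁), ν(λ₂)` are in a common closed chamber, `0`
otherwise) and any (right) `𝒜`-module `X` generated by each of its nonzero
elements, `ν(supp X)` is contained in a single closed Weyl chamber.  The module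
structure is encoded by the operators `T λ` (the action of `E(λ)`). -/
theorem support_in_closed_chamber (D : RootSystemData V)
    {Λ : Type} [Group Λ] (ν : Λ → V) (hν : ∀ a b : Λ, ν (a * b) = ν a + ν b)
    {C : Type} [Field C] {X : Type} [AddCommGroup X] [Module C X]
    (T : Λ → X →ₗ[C] X)
    (hmul : ∀ l₁ l₂ : Λ, (T l₂).comp (T l₁) =
      if D.SameClosedChamber (ν l₁) (ν l₂) then T (l₁ * l₂) else 0)
    (hone : T 1 = LinearMap.id)
    (hgen : ∀ x : X, x ≠ 0 → ∀ y : X,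
      y ∈ Submodule.span C (Set.range fun l : Λ => T l x)) :
    ∃ σ : Module.Dual ℝ V → Bool, ∀ l : Λ, T l ≠ 0 → ∀ β ∈ D.roots,
      (σ β = true → 0 ≤ β (ν l)) ∧ (σ β = false → β (ν l) ≤ 0) := by
  classical
  have key : ∀ β ∈ D.roots, ∀ l₁ l₂ : Λ, T l₁ ≠ 0 → T l₂ ≠ 0 →
      0 < β (ν l₁) → 0 ≤ β (ν l₂) := by
    intro β hβ l₁ l₂ h1 h2 hpos
    by_contra hneg
    push_neg at hneg
    obtain ⟨x, hx⟩ : ∃ x, T l₁ x ≠ 0 := by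
      by_contra h; push_neg at h; exact h1 (LinearMap.ext h)
    obtain ⟨x', hx'⟩ : ∃ x, T l₂ x ≠ 0 := by
      by_contra h; push_neg at h; exact h2 (LinearMap.ext h)
    have hx'mem := hgen (T l₁ x) hx x'
    obtain ⟨m, hm⟩ : ∃ m : Λ, T l₂ (T m (T l₁ x)) ≠ 0 := by
      by_contra h; push_neg at h
      have hsub : Set.range (fun m : Λ => T m (T l₁ x)) ⊆
          (LinearMap.ker (T l₂) : Set X) := by
        rintro _ ⟨m, rfl⟩; exact h m
      exact hx' (Submodule.span_le.mpr hsub hx'mem)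
    have hsame1 : D.SameClosedChamber (ν m) (ν l₂) := by
      by_contra hc
      have := congrArg (fun f : X →ₗ[C] X => f (T l₁ x)) (hmul m l₂)
      rw [if_neg hc] at this
      simp only [LinearMap.comp_apply, LinearMap.zero_apply] at this
      exact hm this
    have hml2 : T (m * l₂) (T l₁ x) ≠ 0 := by
      have heq := congrArg (fun f : X →ₗ[C] X => f (T l₁ x)) (hmul m l₂)
      rw [if_pos hsame1] at heq
      simp only [LinearMap.comp_apply] at heq
      rw [← heq]; exact hm
    have hsame2 : D.SameClosedChamber (ν l₁) (ν (m * l₂)) := by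
      by_contra hc
      have := congrArg (fun f : X →ₗ[C] X => f x) (hmul l₁ (m * l₂))
      rw [if_neg hc] at this
      simp only [LinearMap.comp_apply, LinearMap.zero_apply] at this
      exact hml2 this
    have h3 : 0 ≤ β (ν (m * l₂)) := hsame2 β hβ hpos
    rw [hν, map_add] at h3
    have hm_pos : 0 < β (ν m) := by linarith
    have := hsame1 β hβ hm_pos
    linarith
  refine ⟨fun β => if ∀ l, T l ≠ 0 → 0 ≤ β (ν l) then true else false, ?_⟩
  intro l hl β hβ
  constructor
  · intro hσ
    by_cases h : ∀ l', T l' ≠ 0 → 0 ≤ β (ν l')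
    · exact h l hl
    · simp only [if_neg h] at hσ
      exact absurd hσ (by simp)
  · intro hσ
    by_cases h : ∀ l', T l' ≠ 0 → 0 ≤ β (ν l')
    · simp only [if_pos h] at hσ
      exact absurd hσ (by simp)
    · push_neg at h
      obtain ⟨l₀, hl₀, hlt⟩ := h
      by_contra hc
      push_neg at hc
      exact absurd (key β hβ l l₀ hl hl₀ hc) (not_le.mpr hlt)
end
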